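/- arXiv:2304.13373 — 8 statements merged into one kernel-verified Lean document; each statement's English description precedes it below -/
import Mathlib

section
/- Let U ⊆ ℂ be open and let h : ℂ → ℝ be real-differentiable at every point of U. Define a : ℂ → ℂ by a(z) = ∂_y h(z) − i·∂_x h(z) (the Aharonov–Casher gauge, equivalent to ∂_z h = −i·conj(a)/2). (i) If u⁺ : ℂ → ℂ is real-differentiable on U and satisfies ∂_x u⁺(z) + i·∂_y u⁺(z) = i·a(z)·u⁺(z) for all z ∈ U (i.e. 2∂_{z̄}u⁺ = i a u⁺), then the function z ↦ exp(−h(z))·u⁺(z) is holomorphic (complex-differentiable) on U. (ii) If u⁻ : ℂ → ℂ is real-differentiable on U and satisfies ∂_x u⁻(z) − i·∂_y u⁻(z) = i·conj(a(z))·u⁻(z) for all z ∈ U (i.e. 2∂_z u⁻ = i·conj(a)·u⁻), then z ↦ conj(exp(h(z))·u⁻(z)) is holomorphic on U. -/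
/-!
Write `∂̄ = ∂_x + i∂_y` and `∂ = ∂_x − i∂_y`. In the Aharonov–Casher gauge `i a = ∂̄h` and
`i conj(a) = −∂h`, so the Leibniz rule gives `∂̄(e^{−h} u⁺) = e^{−h}(∂̄u⁺ − (∂̄h) u⁺) = 0` and
`∂(e^{h} u⁻) = e^{h}(∂u⁻ + (∂h) u⁻) = 0`. By Cauchy–Riemann the first function is holomorphic,
and the second is anti-holomorphic, so its conjugate is holomorphic.
-/

open Complex ComplexConjugate

theorem HasFDerivAt.differentiableAt_complex_of_add_I_mul_eq_zero {f : ℂ → ℂ} {f' : ℂ →L[ℝ] ℂ}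
    {z : ℂ} (hf : HasFDerivAt f f' z) (hdbar : f' 1 + I * f' I = 0) :
    DifferentiableAt ℂ f z := by
  have hcr : f' I = I • f' 1 := by
    rw [smul_eq_mul]
    linear_combination (-I) * hdbar + f' I * I_sq
  exact (hf.complexOfReal_hasFDerivAt hcr).differentiableAt

theorem HasFDerivAt.differentiableAt_complex_conj_of_sub_I_mul_eq_zero {f : ℂ → ℂ}
    {f' : ℂ →L[ℝ] ℂ} {z : ℂ} (hf : HasFDerivAt f f' z) (hdz : f' 1 - I * f' I = 0) :
    DifferentiableAt ℂ (fun w => conj (f w)) z := by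
  refine ((conjCLE : ℂ →L[ℝ] ℂ).hasFDerivAt.comp z hf
    ).differentiableAt_complex_of_add_I_mul_eq_zero ?_
  simpa using congrArg conj hdz

theorem HasFDerivAt.ofReal_exp_mul {g : ℂ → ℝ} {g' : ℂ →L[ℝ] ℝ} {u : ℂ → ℂ} {u' : ℂ →L[ℝ] ℂ}
    {z : ℂ} (hg : HasFDerivAt g g' z) (hu : HasFDerivAt u u' z) :
    HasFDerivAt (fun w => (Real.exp (g w) : ℂ) * u w)
      ((Real.exp (g z) : ℂ) • (u' + u z • ofRealCLM.comp g')) z := by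
  have hexp : HasFDerivAt (fun w => (Real.exp (g w) : ℂ))
      (ofRealCLM.comp (Real.exp (g z) • g')) z :=
    ofRealCLM.hasFDerivAt.comp z hg.exp
  refine (hexp.mul hu).congr_fderiv ?_
  ext v
  simp [mul_left_comm]

theorem aharonov_casher_zero_mode_form_general
    (U : Set ℂ)
    (h : ℂ → ℝ) (hh : ∀ z ∈ U, DifferentiableAt ℝ h z)
    (a : ℂ → ℂ)
    (ha : ∀ z : ℂ, a z = ((fderiv ℝ h z Complex.I : ℝ) : ℂ)
        - Complex.I * ((fderiv ℝ h z 1 : ℝ) : ℂ))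
    (up um : ℂ → ℂ)
    (hup : ∀ z ∈ U, DifferentiableAt ℝ up z)
    (hpdeP : ∀ z ∈ U,
      fderiv ℝ up z 1 + Complex.I * fderiv ℝ up z Complex.I
        = Complex.I * a z * up z)
    (hum : ∀ z ∈ U, DifferentiableAt ℝ um z)
    (hpdeM : ∀ z ∈ U,
      fderiv ℝ um z 1 - Complex.I * fderiv ℝ um z Complex.I
        = Complex.I * (starRingEnd ℂ (a z)) * um z) :
    DifferentiableOn ℂ (fun z => ((Real.exp (-h z) : ℝ) : ℂ) * up z) U ∧
    DifferentiableOn ℂ (fun z => starRingEnd ℂ (((Real.exp (h z) : ℝ) : ℂ) * um z)) U := by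
  constructor
  · intro z hz
    refine (((hh z hz).hasFDerivAt.neg.ofReal_exp_mul (hup z hz).hasFDerivAt
      ).differentiableAt_complex_of_add_I_mul_eq_zero ?_).differentiableWithinAt
    have hpde := hpdeP z hz
    rw [ha z] at hpde
    simp only [smul_apply, add_apply, ContinuousLinearMap.comp_apply, neg_apply, ofRealCLM_apply,
      smul_eq_mul, ofReal_neg]
    linear_combination (Real.exp (-h z) : ℂ) * (hpde - up z * (fderiv ℝ h z 1 : ℂ) * I_sq)
  · intro z hz
    refine (((hh z hz).hasFDerivAt.ofReal_exp_mul (hum z hz).hasFDerivAt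
      ).differentiableAt_complex_conj_of_sub_I_mul_eq_zero ?_).differentiableWithinAt
    have hpde := hpdeM z hz
    rw [ha z] at hpde
    simp only [map_sub, map_mul, conj_I, conj_ofReal] at hpde
    simp only [smul_apply, add_apply, ContinuousLinearMap.comp_apply, ofRealCLM_apply, smul_eq_mul]
    linear_combination (Real.exp (h z) : ℂ) * (hpde + um z * (fderiv ℝ h z 1 : ℂ) * I_sq)

/-- Proposition 2.4 (zero modes of the magnetic Dirac operator): in the
Aharonov–Casher gauge `a = ∂_y h − i ∂_x h`, solutions of
`2∂_{z̄} u⁺ = i a u⁺` yield `e^{−h} u⁺` holomorphic on `U`, and solutions of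
`2∂_z u⁻ = i conj(a) u⁻` yield `conj(e^{h} u⁻)` holomorphic on `U`. -/
theorem aharonov_casher_zero_mode_form
    (U : Set ℂ) (hU : IsOpen U)
    (h : ℂ → ℝ) (hh : ∀ z ∈ U, DifferentiableAt ℝ h z)
    (a : ℂ → ℂ)
    (ha : ∀ z : ℂ, a z = ((fderiv ℝ h z Complex.I : ℝ) : ℂ)
        - Complex.I * ((fderiv ℝ h z 1 : ℝ) : ℂ))
    (up um : ℂ → ℂ)
    (hup : ∀ z ∈ U, DifferentiableAt ℝ up z)
    (hpdeP : ∀ z ∈ U,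
      fderiv ℝ up z 1 + Complex.I * fderiv ℝ up z Complex.I
        = Complex.I * a z * up z)
    (hum : ∀ z ∈ U, DifferentiableAt ℝ um z)
    (hpdeM : ∀ z ∈ U,
      fderiv ℝ um z 1 - Complex.I * fderiv ℝ um z Complex.I
        = Complex.I * (starRingEnd ℂ (a z)) * um z) :
    DifferentiableOn ℂ (fun z => ((Real.exp (-h z) : ℝ) : ℂ) * up z) U ∧
    DifferentiableOn ℂ (fun z => starRingEnd ℂ (((Real.exp (h z) : ℝ) : ℂ) * um z)) U :=
  aharonov_casher_zero_mode_form_general U h hh a ha up um hup hpdeP hum hpdeM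
end

section
/- Let 0 < r < R < ∞ and let a : ℤ → ℂ. Suppose f : ℂ → ℂ is a function such that for every compact subannulus {r' ≤ |z| ≤ R'} with r < r' < R' < R, the series Σ_{n∈ℤ} a(n)·zⁿ converges uniformly on it with sum f(z). Then, as an identity in [0, ∞], ∫_{{z : r < |z| < R}} |f(z)|² dA(z) = 2π·( |a(−1)|²·log(R/r) + Σ_{n∈ℤ, n≠−1} |a(n)|²·(R^{2n+2} − r^{2n+2})/(2n+2) ). -/
/-!
On a circle `|z| = ρ` inside the annulus the Laurent series converges uniformly, so the Fourier
coefficients of `θ ↦ f (ρ e^{iθ})` are `a n * ρ ^ n`, and Parseval's identity gives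
`∫_{-π}^{π} |f (ρ e^{iθ})|² dθ = 2π ∑ |a n|² ρ^{2n}`. Integrating this against `ρ dρ` (polar
coordinates) and exchanging sum and integral (Tonelli; all terms are nonnegative) leaves the radial
integrals `∫_r^R ρ^{2n+1} dρ`, which is `log (R / r)` for `n = -1`.
-/

open MeasureTheory Filter Set Metric
open scoped Real Topology Interval

section Fourier

variable {E : Type*} [NormedAddCommGroup E] [NormedSpace ℂ E]

theorem tendsto_fourierCoeffOn_of_tendstoUniformlyOn {a b : ℝ} (hab : a < b) {ι : Type*}
    {l : Filter ι} [l.IsCountablyGenerated] {F : ι → ℝ → E} {f : ℝ → E}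
    (hF : ∀ᶠ i in l, ContinuousOn (F i) [[a, b]]) (hlim : TendstoUniformlyOn F f l [[a, b]])
    (n : ℤ) : Tendsto (fun i => fourierCoeffOn hab (F i) n) l (𝓝 (fourierCoeffOn hab f n)) := by
  simp only [fourierCoeffOn_eq_integral]
  refine (TendstoUniformlyOn.tendsto_intervalIntegral_of_continuousOn ?_ ?_).const_smul _
  · have : Continuous fun x : ℝ => fourier (T := b - a) (-n) x := by fun_prop
    exact hF.mono fun i hi => this.continuousOn.smul hi
  · rw [Metric.tendstoUniformlyOn_iff] at hlim ⊢
    intro ε hε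
    filter_upwards [hlim ε hε] with i hi x hx
    rw [dist_smul₀, fourier_apply, Circle.norm_coe, one_mul]
    exact hi x hx

theorem fourierCoeffOn_coe_eq_fourierCoeff {T : ℝ} [hT : Fact (0 < T)] (a : ℝ)
    (g : AddCircle T → E) (n : ℤ) :
    fourierCoeffOn (lt_add_of_pos_right a hT.out) (fun x : ℝ => g x) n = fourierCoeff g n := by
  rw [fourierCoeffOn_eq_integral, fourierCoeff_eq_intervalIntegral _ _ a, add_sub_cancel_left]

theorem fourierCoeff_sum_smul_fourier {T : ℝ} [Fact (0 < T)] (s : Finset ℤ) (c : ℤ → ℂ)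
    (n : ℤ) :
    fourierCoeff (fun t : AddCircle T => ∑ m ∈ s, c m • fourier m t) n
      = if n ∈ s then c n else 0 := by
  have hsum : (fun t : AddCircle T => ∑ m ∈ s, c m • fourier m t)
      = ∑ m ∈ s, c m • ⇑(fourier (T := T) m) := by
    ext t
    simp [Finset.sum_apply]
  have hint (m : ℤ) : Integrable (c m • ⇑(fourier (T := T) m)) AddCircle.haarAddCircle :=
    ((fourier m).continuous.const_smul _).integrable_of_hasCompactSupport (.of_compactSpace _)
  rw [hsum, fourierCoeff.sum _ _ fun m _ => hint m, Finset.sum_apply]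
  simp [fourierCoeff.const_smul, fourierCoeff_fourier, Pi.single_apply]

end Fourier

theorem Continuous.memLp_restrict_Ioc {E : Type*} [NormedAddCommGroup E] {f : ℝ → E}
    (hf : Continuous f) (p : ENNReal) (a b : ℝ) : MemLp f p (volume.restrict (Ioc a b)) := by
  obtain ⟨C, hC⟩ := (isCompact_Icc (a := a) (b := b)).exists_bound_of_continuousOn hf.continuousOn
  exact .of_bound hf.aestronglyMeasurable C <|
    (ae_restrict_iff' measurableSet_Ioc).2 (.of_forall fun x hx => hC x (Ioc_subset_Icc_self hx))

theorem circleMap_zero_zpow_eq_mul_fourier (ρ θ : ℝ) (n : ℤ) :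
    circleMap 0 ρ θ ^ n = (ρ : ℂ) ^ n * fourier (T := 2 * π) n θ := by
  have : (π : ℂ) ≠ 0 := by exact_mod_cast Real.pi_ne_zero
  rw [circleMap_zero_zpow, circleMap_zero, fourier_coe_apply, Complex.ofReal_zpow]
  congr 2
  push_cast
  field_simp

theorem continuousOn_sum_mul_zpow (a : ℤ → ℂ) (s : Finset ℤ) :
    ContinuousOn (fun z : ℂ => ∑ n ∈ s, a n * z ^ n) {0}ᶜ :=
  continuousOn_finsetSum s fun n _ => continuousOn_const.mul (continuousOn_zpow₀ n)

theorem hasSum_norm_sq_mul_zpow_of_tendstoUniformlyOn_sphere {a : ℤ → ℂ} {f : ℂ → ℂ} {ρ : ℝ}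
    (h : TendstoUniformlyOn (fun s z => ∑ n ∈ s, a n * z ^ n) f atTop (sphere 0 |ρ|)) :
    HasSum (fun n => ‖a n‖ ^ 2 * ρ ^ (2 * n)) (Real.circleAverage (fun z => ‖f z‖ ^ 2) 0 ρ) := by
  have : Fact (0 < 2 * π) := ⟨Real.two_pi_pos⟩
  -- `0 + 2 * π` is the shape `a + T` that `fourierCoeffOn_coe_eq_fourierCoeff` needs
  have hab : (0 : ℝ) < 0 + 2 * π := lt_add_of_pos_right 0 Real.two_pi_pos
  set c : ℤ → ℂ := fun n => a n * (ρ : ℂ) ^ n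
  set P : Finset ℤ → AddCircle (2 * π) → ℂ := fun s t => ∑ n ∈ s, c n • fourier n t
  have hP (s : Finset ℤ) (θ : ℝ) : P s θ = ∑ n ∈ s, a n * circleMap 0 ρ θ ^ n := by
    simp [P, c, circleMap_zero_zpow_eq_mul_fourier, mul_assoc]
  have hunif : TendstoUniformlyOn (fun s (θ : ℝ) => P s θ) (fun θ => f (circleMap 0 ρ θ))
      atTop univ := by
    simpa [hP, Function.comp_def] using
      (h.comp (circleMap 0 ρ)).mono fun θ _ => circleMap_mem_sphere' 0 ρ θ
  have hPc (s : Finset ℤ) : Continuous fun θ : ℝ => P s θ := by fun_prop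
  have hF : Continuous fun θ => f (circleMap 0 ρ θ) := continuousOn_univ.1 <|
    hunif.continuousOn (.of_forall fun s => (hPc s).continuousOn)
  have hcoeff (n : ℤ) : fourierCoeffOn hab (fun θ => f (circleMap 0 ρ θ)) n = c n := by
    refine tendsto_nhds_unique (tendsto_fourierCoeffOn_of_tendstoUniformlyOn hab
      (.of_forall fun s => (hPc s).continuousOn) (hunif.mono (subset_univ _)) n)
      (tendsto_const_nhds.congr' ?_)
    filter_upwards [eventually_ge_atTop {n}] with s hs
    rw [fourierCoeffOn_coe_eq_fourierCoeff, fourierCoeff_sum_smul_fourier,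
      if_pos (hs (Finset.mem_singleton_self n))]
  have hparseval := hasSum_sq_fourierCoeffOn hab (hF.memLp_restrict_Ioc 2 _ _)
  simp only [hcoeff] at hparseval
  convert hparseval using 1
  · ext n
    rw [norm_mul, mul_pow, norm_zpow, Complex.norm_real, Real.norm_eq_abs,
      ← zpow_natCast (|ρ| ^ n), ← zpow_mul, Nat.cast_ofNat, mul_comm n, (even_two_mul n).zpow_abs]
  · simp [Real.circleAverage_def]

theorem lintegral_Ioo_ofReal_eq_ofReal_integral {f : ℝ → ℝ} {a b : ℝ} (hab : a ≤ b)
    (hf : IntervalIntegrable f volume a b) (hf0 : ∀ x ∈ Ioo a b, 0 ≤ f x) :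
    ∫⁻ x in Ioo a b, ENNReal.ofReal (f x) = ENNReal.ofReal (∫ x in a..b, f x) := by
  rw [intervalIntegral.integral_of_le hab, integral_Ioc_eq_integral_Ioo,
    ofReal_integral_eq_lintegral_ofReal (hf.1.mono_set Ioo_subset_Ioc_self)
      ((ae_restrict_iff' measurableSet_Ioo).2 (.of_forall hf0))]

theorem integral_neg_pi_pi_circleMap {E : Type*} [NormedAddCommGroup E] [NormedSpace ℝ E]
    (g : ℂ → E) (c : ℂ) (ρ : ℝ) :
    ∫ θ in -π..π, g (circleMap c ρ θ) = (2 * π) • Real.circleAverage g c ρ := by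
  rw [Real.circleAverage_def, smul_inv_smul₀ Real.two_pi_pos.ne']
  have := ((periodic_circleMap c ρ).comp g).intervalIntegral_add_eq (-π) 0
  rwa [show -π + 2 * π = π by ring, zero_add] at this

theorem lintegral_Ioo_circleMap_eq_ofReal_circleAverage {g : ℂ → ℝ} {c : ℂ} {ρ : ℝ}
    (hg : ContinuousOn g (sphere c |ρ|)) (hg0 : ∀ z, 0 ≤ g z) :
    ∫⁻ θ in Ioo (-π) π, ENNReal.ofReal (g (circleMap c ρ θ))
      = ENNReal.ofReal (2 * π * Real.circleAverage g c ρ) := by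
  have hcont : Continuous fun θ => g (circleMap c ρ θ) :=
    hg.comp_continuous (continuous_circleMap c ρ) (circleMap_mem_sphere' c ρ)
  rw [lintegral_Ioo_ofReal_eq_ofReal_integral (by linarith [Real.pi_pos])
    (hcont.intervalIntegrable _ _) fun θ _ => hg0 _, integral_neg_pi_pi_circleMap, smul_eq_mul]

theorem ofReal_mul_lintegral_sq_norm_circleMap_eq_tsum {a : ℤ → ℂ} {f : ℂ → ℂ} {ρ : ℝ}
    (hρ : 0 < ρ)
    (h : TendstoUniformlyOn (fun s z => ∑ n ∈ s, a n * z ^ n) f atTop (sphere 0 ρ)) :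
    ENNReal.ofReal ρ * ∫⁻ θ in Ioo (-π) π, ENNReal.ofReal (‖f (circleMap 0 ρ θ)‖ ^ 2)
      = ENNReal.ofReal (2 * π) * ∑' n, ENNReal.ofReal (‖a n‖ ^ 2 * ρ ^ (2 * n + 1)) := by
  have hf : ContinuousOn f (sphere 0 ρ) := h.continuousOn <| .of_forall fun s =>
    (continuousOn_sum_mul_zpow a s).mono fun z hz => ne_of_mem_sphere hz hρ.ne'
  rw [← abs_of_pos hρ] at h hf
  have hsum : HasSum (fun n : ℤ => ‖a n‖ ^ 2 * ρ ^ (2 * n + 1))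
      (ρ * Real.circleAverage (fun z => ‖f z‖ ^ 2) 0 ρ) := by
    refine ((hasSum_norm_sq_mul_zpow_of_tendstoUniformlyOn_sphere h).mul_left ρ).congr_fun
      fun n => ?_
    rw [zpow_add_one₀ hρ.ne']
    ring
  rw [lintegral_Ioo_circleMap_eq_ofReal_circleAverage (g := fun z => ‖f z‖ ^ 2) (hf.norm.pow 2)
      fun z => sq_nonneg _, ← ENNReal.ofReal_tsum_of_nonneg (fun n => by positivity)
      hsum.summable, hsum.tsum_eq, ← ENNReal.ofReal_mul hρ.le, ← ENNReal.ofReal_mul (by positivity),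
    mul_left_comm]

theorem isOpen_annulus {E : Type*} [SeminormedAddCommGroup E] (r R : ℝ) :
    IsOpen {z : E | r < ‖z‖ ∧ ‖z‖ < R} :=
  isOpen_Ioo.preimage continuous_norm

theorem tendstoLocallyUniformlyOn_annulus {E F ι : Type*} [SeminormedAddCommGroup E]
    [UniformSpace F] {G : ι → E → F} {g : E → F} {l : Filter ι} {r R : ℝ}
    (h : ∀ r' R' : ℝ, r < r' → r' < R' → R' < R →
      TendstoUniformlyOn G g l {z | r' ≤ ‖z‖ ∧ ‖z‖ ≤ R'}) :
    TendstoLocallyUniformlyOn G g l {z | r < ‖z‖ ∧ ‖z‖ < R} := by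
  refine tendstoLocallyUniformlyOn_of_forall_exists_nhds fun z ⟨hrz, hzR⟩ => ?_
  refine ⟨_, mem_nhdsWithin_of_mem_nhds ?_, h ((r + ‖z‖) / 2) ((‖z‖ + R) / 2)
    (by linarith) (by linarith) (by linarith)⟩
  have hz : z ∈ (‖·‖) ⁻¹' Ioo ((r + ‖z‖) / 2) ((‖z‖ + R) / 2) := ⟨by linarith, by linarith⟩
  exact mem_of_superset ((isOpen_Ioo.preimage continuous_norm).mem_nhds hz)
    fun w hw => ⟨hw.1.le, hw.2.le⟩

theorem lintegral_annulus_eq_lintegral_circleMap {r R : ℝ} (hr : 0 ≤ r) {g : ℂ → ENNReal}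
    (hg : Measurable g) :
    ∫⁻ z in {z : ℂ | r < ‖z‖ ∧ ‖z‖ < R}, g z
      = ∫⁻ ρ in Ioo r R, ENNReal.ofReal ρ * ∫⁻ θ in Ioo (-π) π, g (circleMap 0 ρ θ) := by
  set A := {z : ℂ | r < ‖z‖ ∧ ‖z‖ < R}
  have hA : MeasurableSet A := (isOpen_annulus r R).measurableSet
  have hsymm (p : ℝ × ℝ) : Complex.polarCoord.symm p = circleMap 0 p.1 p.2 := by
    simp [circleMap_zero, Complex.exp_mul_I, ← Complex.ofReal_cos, ← Complex.ofReal_sin]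
  have hpolar : Continuous fun p : ℝ × ℝ => circleMap 0 p.1 p.2 := by
    simp only [circleMap_zero]
    fun_prop
  have htarget : (fun p : ℝ × ℝ => circleMap 0 p.1 p.2) ⁻¹' A ∩ polarCoord.target
      = Ioo r R ×ˢ Ioo (-π) π := by
    ext ⟨ρ, θ⟩
    simp only [polarCoord_target, mem_inter_iff, mem_prod, mem_preimage, A,
      mem_ofPred_eq, mem_Ioi, mem_Ioo, norm_circleMap_zero]
    constructor
    · rintro ⟨⟨h1, h2⟩, hρ, hθ⟩
      rw [abs_of_pos hρ] at h1 h2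
      exact ⟨⟨h1, h2⟩, hθ⟩
    · rintro ⟨⟨h1, h2⟩, hθ⟩
      have hρ : 0 < ρ := hr.trans_lt h1
      rw [abs_of_pos hρ]
      exact ⟨⟨h1, h2⟩, hρ, hθ⟩
  have hmeas : Measurable fun p : ℝ × ℝ => ENNReal.ofReal p.1 * g (circleMap 0 p.1 p.2) :=
    measurable_fst.ennreal_ofReal.mul (hg.comp hpolar.measurable)
  calc ∫⁻ z in A, g z
      = ∫⁻ p in polarCoord.target,
          ENNReal.ofReal p.1 • A.indicator g (Complex.polarCoord.symm p) := by
        rw [Complex.lintegral_comp_polarCoord_symm, lintegral_indicator hA]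
    _ = ∫⁻ p in Ioo r R ×ˢ Ioo (-π) π, ENNReal.ofReal p.1 * g (circleMap 0 p.1 p.2) := by
        rw [← htarget, ← Measure.restrict_restrict (hA.preimage hpolar.measurable),
          ← lintegral_indicator (hA.preimage hpolar.measurable)]
        congr 1 with p
        by_cases hp : circleMap 0 p.1 p.2 ∈ A <;> simp [hp, hsymm]
    _ = _ := by
        rw [Measure.volume_eq_prod, setLIntegral_prod _ hmeas.aemeasurable]
        exact lintegral_congr fun ρ => lintegral_const_mul' _ _ ENNReal.ofReal_ne_top

theorem lintegral_annulus_eq_lintegral_circleMap_of_continuousOn {r R : ℝ} (hr : 0 ≤ r)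
    {g : ℂ → ENNReal} (hg : ContinuousOn g {z : ℂ | r < ‖z‖ ∧ ‖z‖ < R}) :
    ∫⁻ z in {z : ℂ | r < ‖z‖ ∧ ‖z‖ < R}, g z
      = ∫⁻ ρ in Ioo r R, ENNReal.ofReal ρ * ∫⁻ θ in Ioo (-π) π, g (circleMap 0 ρ θ) := by
  classical
  set A := {z : ℂ | r < ‖z‖ ∧ ‖z‖ < R}
  have hA : MeasurableSet A := (isOpen_annulus r R).measurableSet
  -- `g` need not be measurable off the annulus, so we integrate a measurable modification
  have hmeas : Measurable (A.piecewise g 0) :=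
    hg.measurable_piecewise continuousOn_const hA
  have hcircle {ρ : ℝ} (hρ : ρ ∈ Ioo r R) (θ : ℝ) : circleMap 0 ρ θ ∈ A := by
    simpa [A, abs_of_pos (hr.trans_lt hρ.1)] using hρ
  rw [setLIntegral_congr_fun hA fun z hz => (piecewise_eq_of_mem A g 0 hz).symm,
    lintegral_annulus_eq_lintegral_circleMap hr hmeas]
  refine setLIntegral_congr_fun measurableSet_Ioo fun ρ hρ => ?_
  simp only [piecewise_eq_of_mem _ _ _ (hcircle hρ _)]

theorem integral_zpow_of_pos {r R : ℝ} (hr : 0 < r) (hR : 0 < R) (m : ℤ) :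
    ∫ x in r..R, x ^ m
      = if m = -1 then Real.log (R / r) else (R ^ (m + 1) - r ^ (m + 1)) / (m + 1) := by
  have h0 : (0 : ℝ) ∉ [[r, R]] := notMem_uIcc_of_lt hr hR
  split_ifs with hm
  · simpa [hm] using integral_inv h0
  · rw [integral_zpow (.inr ⟨hm, h0⟩)]

theorem lintegral_Ioo_ofReal_const_mul_zpow {r R c : ℝ} (hr : 0 < r) (hrR : r ≤ R) (hc : 0 ≤ c)
    (m : ℤ) :
    ∫⁻ x in Ioo r R, ENNReal.ofReal (c * x ^ m) = ENNReal.ofReal (c * ∫ x in r..R, x ^ m) := by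
  rw [← intervalIntegral.integral_const_mul, lintegral_Ioo_ofReal_eq_ofReal_integral hrR
    ((intervalIntegral.intervalIntegrable_zpow
      (.inr (notMem_uIcc_of_lt hr (hr.trans_le hrR)))).const_mul _)
    fun x hx => by have := hr.trans hx.1; positivity]

theorem ENNReal.tsum_eq_add_tsum_ne {β : Type*} (f : β → ENNReal) (b : β) :
    ∑' x, f x = f b + ∑' x : {x // x ≠ b}, f x := by
  rw [← ENNReal.summable.tsum_add_tsum_compl (s := {b}) ENNReal.summable, tsum_singleton b f]
  rfl

/-- Parseval-type computation (underlying Lemma 2.7): the `L²` norm of a Laurent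
series `f(z) = Σ_{n∈ℤ} a(n) zⁿ` on the annulus `r < |z| < R`, as an identity in
`[0,∞]`, equals
`2π (|a(−1)|² log(R/r) + Σ_{n≠−1} |a(n)|² (R^{2n+2} − r^{2n+2})/(2n+2))`. -/
theorem laurent_series_annulus_L2_norm
    (r R : ℝ) (hr : 0 < r) (hrR : r < R)
    (a : ℤ → ℂ) (f : ℂ → ℂ)
    (hconv : ∀ r' R' : ℝ, r < r' → r' < R' → R' < R →
      TendstoUniformlyOn (fun (s : Finset ℤ) (z : ℂ) => ∑ n ∈ s, a n * z ^ n) f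
        Filter.atTop {z : ℂ | r' ≤ ‖z‖ ∧ ‖z‖ ≤ R'}) :
    (∫⁻ z in {z : ℂ | r < ‖z‖ ∧ ‖z‖ < R},
        ENNReal.ofReal (‖f z‖ ^ 2))
      = ENNReal.ofReal (2 * Real.pi) *
        (ENNReal.ofReal (‖a (-1)‖ ^ 2 * Real.log (R / r)) +
          ∑' n : {m : ℤ // m ≠ -1},
            ENNReal.ofReal (‖a (n : ℤ)‖ ^ 2 *
              ((R ^ (2 * (n : ℤ) + 2) - r ^ (2 * (n : ℤ) + 2)) /
                (2 * ((n : ℤ) : ℝ) + 2)))) := by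
  set A := {z : ℂ | r < ‖z‖ ∧ ‖z‖ < R}
  have hloc := tendstoLocallyUniformlyOn_annulus hconv
  have hfA : ContinuousOn f A := hloc.continuousOn <| .of_forall fun s =>
    (continuousOn_sum_mul_zpow a s).mono fun z hz => norm_pos_iff.1 (hr.trans hz.1)
  have hsphere {ρ : ℝ} (hρ : ρ ∈ Ioo r R) : sphere 0 ρ ⊆ A := fun z hz => by
    simpa [A, mem_sphere_zero_iff_norm.1 hz] using hρ
  calc ∫⁻ z in A, ENNReal.ofReal (‖f z‖ ^ 2)
      = ∫⁻ ρ in Ioo r R, ENNReal.ofReal ρ *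
          ∫⁻ θ in Ioo (-π) π, ENNReal.ofReal (‖f (circleMap 0 ρ θ)‖ ^ 2) :=
        lintegral_annulus_eq_lintegral_circleMap_of_continuousOn hr.le
          (ENNReal.continuous_ofReal.comp_continuousOn (hfA.norm.pow 2))
    _ = ∫⁻ ρ in Ioo r R, ENNReal.ofReal (2 * π) *
          ∑' n : ℤ, ENNReal.ofReal (‖a n‖ ^ 2 * ρ ^ (2 * n + 1)) :=
        setLIntegral_congr_fun measurableSet_Ioo fun ρ hρ =>
          ofReal_mul_lintegral_sq_norm_circleMap_eq_tsum (hr.trans hρ.1)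
            ((tendstoLocallyUniformlyOn_iff_forall_isCompact (isOpen_annulus r R)).1 hloc _
              (hsphere hρ) (isCompact_sphere 0 ρ))
    _ = ENNReal.ofReal (2 * π) *
          ∑' n : ℤ, ENNReal.ofReal (‖a n‖ ^ 2 * ∫ ρ in r..R, ρ ^ (2 * n + 1)) := by
        rw [lintegral_const_mul' _ _ ENNReal.ofReal_ne_top, lintegral_tsum fun n => by fun_prop]
        simp_rw [lintegral_Ioo_ofReal_const_mul_zpow hr hrR.le (sq_nonneg _)]
    _ = _ := by
        rw [ENNReal.tsum_eq_add_tsum_ne _ (-1), integral_zpow_of_pos hr (hr.trans hrR),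
          if_pos (by norm_num)]
        congr 2
        refine tsum_congr fun n => ?_
        rw [integral_zpow_of_pos hr (hr.trans hrR), if_neg (by have := n.2; omega)]
        push_cast
        ring_nf
end

section
/- Let Φ ∈ ℝ, R₀ ≥ 1, C ≥ 0, and let h : ℂ → ℝ be a measurable function satisfying |h(z) + (Φ/2π)·log|z|| ≤ C/|z| for all z with |z| ≥ R₀. Then for every natural number n: ∫_{{z : |z| > R₀}} exp(2h(z))·|z|^{2n} dA(z) < ∞ if and only if n < Φ/(2π) − 1. -/
/-!
On `|z| > R₀ ≥ 1` the asymptotics give `|h z + (Φ/2π) log |z|| ≤ C`, so the integrand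
`e^{2h(z)} |z|^{2n}` lies within a factor `e^{±2C}` of `|z|^{2n - 2Φ/2π}`. In polar coordinates
`∫_{|z|>R} |z|^q dA = 2π ∫_R^∞ r^{q+1} dr`, which is finite iff `q < -2`.
-/

open MeasureTheory Set Module

theorem integrableOn_iff_of_norm_le_const_mul {α F G : Type*} [MeasurableSpace α]
    {μ : Measure α} [NormedAddCommGroup F] [NormedAddCommGroup G] {f : α → F} {g : α → G}
    {s : Set α} {c : ℝ} (hs : MeasurableSet s) (hf : AEStronglyMeasurable f (μ.restrict s))
    (hg : AEStronglyMeasurable g (μ.restrict s))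
    (hfg : ∀ x ∈ s, ‖f x‖ ≤ c * ‖g x‖) (hgf : ∀ x ∈ s, ‖g x‖ ≤ c * ‖f x‖) :
    IntegrableOn f s μ ↔ IntegrableOn g s μ :=
  ⟨fun hfi ↦ (hfi.norm.const_mul c).mono' hg (ae_restrict_of_forall_mem hs hgf),
    fun hgi ↦ (hgi.norm.const_mul c).mono' hf (ae_restrict_of_forall_mem hs hfg)⟩

theorem Real.exp_mul_rpow_le_and_rpow_sub_le {x t m a C : ℝ} (ha : 0 < a)
    (hC : |x + t * Real.log a| ≤ C) :
    Real.exp x * a ^ m ≤ Real.exp C * a ^ (m - t) ∧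
      a ^ (m - t) ≤ Real.exp C * (Real.exp x * a ^ m) := by
  have hsplit : Real.exp x * a ^ m = Real.exp (x + t * Real.log a) * a ^ (m - t) := by
    rw [Real.exp_add, Real.rpow_sub ha, mul_comm t, ← Real.rpow_def_of_pos ha]
    field_simp
  obtain ⟨hlo, hhi⟩ := abs_le.1 hC
  constructor
  · rw [hsplit]
    gcongr
  · rw [hsplit, ← mul_assoc, ← Real.exp_add]
    exact le_mul_of_one_le_left (by positivity) (Real.one_le_exp (by linarith))

section PolarCoordinates

variable {E : Type*} [NormedAddCommGroup E] [NormedSpace ℝ E] [FiniteDimensional ℝ E]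
  [Nontrivial E] [MeasurableSpace E] [BorelSpace E] (μ : Measure E) [μ.IsAddHaarMeasure]

theorem integrableOn_norm_rpow_iff {R q : ℝ} (hR : 0 < R) :
    IntegrableOn (fun x : E ↦ ‖x‖ ^ q) {x | R < ‖x‖} μ ↔ q < -(finrank ℝ E : ℝ) := by
  have hd : 1 ≤ finrank ℝ E := finrank_pos
  calc IntegrableOn (fun x : E ↦ ‖x‖ ^ q) {x | R < ‖x‖} μ
      ↔ Integrable (fun x : E ↦ (Ioi R).indicator (· ^ q) ‖x‖) μ := by
        rw [← integrable_indicator_iff (measurableSet_lt measurable_const measurable_norm)]; rfl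
    _ ↔ IntegrableOn (fun y : ℝ ↦ y ^ (finrank ℝ E - 1) • (Ioi R).indicator (· ^ q) y) (Ioi 0) :=
        integrable_fun_norm_addHaar μ
    _ ↔ IntegrableOn (fun y : ℝ ↦ y ^ ((finrank ℝ E - 1 : ℕ) + q)) (Ioi R) := by
        have hind : (fun y : ℝ ↦ y ^ (finrank ℝ E - 1) • (Ioi R).indicator (· ^ q) y) =
            (Ioi R).indicator (fun y ↦ y ^ (finrank ℝ E - 1) * y ^ q) :=
          funext fun y ↦ (indicator_mul_right (Ioi R) (· ^ (finrank ℝ E - 1)) (· ^ q)).symm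
        rw [hind, IntegrableOn, integrable_indicator_iff measurableSet_Ioi, IntegrableOn,
          Measure.restrict_restrict measurableSet_Ioi, inter_eq_left.2 (Ioi_subset_Ioi hR.le)]
        refine integrableOn_congr_fun (fun y (hy : R < y) ↦ ?_) measurableSet_Ioi
        rw [Real.rpow_add (hR.trans hy), Real.rpow_natCast]
    _ ↔ q < -(finrank ℝ E : ℝ) := by
        rw [integrableOn_Ioi_rpow_iff hR, Nat.cast_sub hd]
        constructor <;> intro <;> push_cast at * <;> linarith

end PolarCoordinates

/-- Square-integrability criterion at infinity (final step of Theorem 2.1):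
given the asymptotics `|h(z) + (Φ/2π) log|z|| ≤ C/|z|` for `|z| ≥ R₀`, the
function `e^{2h(z)} |z|^{2n}` is integrable on `{|z| > R₀}` iff `n < Φ/2π − 1`. -/
theorem zero_mode_integrability_at_infinity
    (Φ R₀ C : ℝ) (hR₀ : 1 ≤ R₀) (hC : 0 ≤ C)
    (h : ℂ → ℝ) (hmeas : Measurable h)
    (hasym : ∀ z : ℂ, R₀ ≤ ‖z‖ →
      |h z + (Φ / (2 * Real.pi)) * Real.log (‖z‖)| ≤ C / ‖z‖)
    (n : ℕ) :
    (∫⁻ z in {z : ℂ | R₀ < ‖z‖},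
        ENNReal.ofReal (Real.exp (2 * h z) * ‖z‖ ^ (2 * n))) < ⊤
      ↔ (n : ℝ) < Φ / (2 * Real.pi) - 1 := by
  set t := Φ / (2 * Real.pi)
  have hS : MeasurableSet {z : ℂ | R₀ < ‖z‖} := measurableSet_lt measurable_const measurable_norm
  have hbounds : ∀ z ∈ {z : ℂ | R₀ < ‖z‖},
      ‖Real.exp (2 * h z) * ‖z‖ ^ (2 * n)‖ ≤ Real.exp (2 * C) * ‖‖z‖ ^ (2 * n - 2 * t : ℝ)‖ ∧
        ‖‖z‖ ^ (2 * n - 2 * t : ℝ)‖ ≤ Real.exp (2 * C) * ‖Real.exp (2 * h z) * ‖z‖ ^ (2 * n)‖ := by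
    intro z (hz : R₀ < ‖z‖)
    have hz1 : 1 ≤ ‖z‖ := hR₀.trans hz.le
    have hbound : |2 * h z + 2 * t * Real.log ‖z‖| ≤ 2 * C := by
      rw [show 2 * h z + 2 * t * Real.log ‖z‖ = 2 * (h z + t * Real.log ‖z‖) by ring, abs_mul,
        abs_two]
      gcongr
      exact (hasym z hz.le).trans (div_le_self hC hz1)
    have hcmp := Real.exp_mul_rpow_le_and_rpow_sub_le (m := (2 * n : ℕ)) (by linarith) hbound
    rw [Real.rpow_natCast] at hcmp
    push_cast at hcmp
    simpa [abs_of_nonneg (Real.rpow_nonneg (norm_nonneg z) _)] using hcmp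
  rw [lt_top_iff_ne_top, lintegral_ofReal_ne_top_iff_integrable (by fun_prop)
      (ae_restrict_of_forall_mem hS fun z _ ↦ by positivity), ← IntegrableOn,
    integrableOn_iff_of_norm_le_const_mul hS (by fun_prop)
      (measurable_norm.pow_const _).aestronglyMeasurable
      (fun z hz ↦ (hbounds z hz).1) (fun z hz ↦ (hbounds z hz).2),
    integrableOn_norm_rpow_iff volume (by linarith), Complex.finrank_real_complex, Nat.cast_ofNat]
  constructor <;> intro <;> linarith
end

section
/- Let c ∈ ℝ \ ℤ and let ⟨c⟩ ∈ (0,1) be the unique number in (0,1) differing from c by an integer. Then there exists a function F : ℂ → ℂ that is analytic on the half-plane {s ∈ ℂ : Re s > −1}, such that for every s ∈ ℂ with Re s > 1 one has F(s) = Σ_{n∈ℤ} sign(n − c)·|n − c|^{−s} (the series converging absolutely, with |n−c|^{−s} = exp(−s·log|n−c|)), and such that F(0) = −1 + 2⟨c⟩. Moreover, if c ∈ ℤ then the analogous function obtained by summing over n ∈ ℤ with n ≠ c vanishes identically, so its value at 0 is 0. -/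
/-!
For `c ∉ ℤ` the eta series is `-2 · hurwitzZetaOdd c s`, which is entire, so everything reduces to
the value `hurwitzZetaOdd a 0 = 1/2 - a` for `a ∈ (0, 1)`. For `Re s > 1`,
`2 · hurwitzZetaOdd a s = Σₙ ((n + a)^{-s} - (n + 1 - a)^{-s})`; adding the telescoping series
`(2a - 1) Σₙ ((n + 1)^{-s} - (n + 2)^{-s}) = 2a - 1` cancels the first-order Taylor term of each
summand, so the corrected series converges locally uniformly on `Re s > -1`. Its terms vanish at
`s = 0`, and the identity theorem gives `2 · hurwitzZetaOdd a 0 + 2a - 1 = 0`.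
For `c ∈ ℤ` the same series computes `-2 · hurwitzZetaOdd 0 s = 0`.
-/

open Complex HurwitzZeta Set

theorem norm_sub_sub_smul_deriv_le {E : Type*} [NormedAddCommGroup E] [NormedSpace ℝ E]
    {f f' f'' : ℝ → E} {p q M : ℝ}
    (hf : ∀ t ∈ Icc p q, HasDerivWithinAt f (f' t) (Icc p q) t)
    (hf' : ∀ t ∈ Icc p q, HasDerivWithinAt f' (f'' t) (Icc p q) t)
    (hM : ∀ t ∈ Icc p q, ‖f'' t‖ ≤ M) {x y z : ℝ}
    (hx : x ∈ Icc p q) (hy : y ∈ Icc p q) (hz : z ∈ Icc p q) :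
    ‖f x - f y - (x - y) • f' z‖ ≤ M * (q - p) * |x - y| := by
  have hf'_lip : ∀ t ∈ Icc p q, ‖f' t - f' z‖ ≤ M * (q - p) := fun t ht => by
    have hM0 : 0 ≤ M := (norm_nonneg _).trans (hM z hz)
    calc ‖f' t - f' z‖ ≤ M * ‖t - z‖ :=
          (convex_Icc p q).norm_image_sub_le_of_norm_hasDerivWithin_le hf' hM hz ht
      _ ≤ M * (q - p) := by
          gcongr
          rw [Real.norm_eq_abs, abs_le]
          constructor <;> linarith [ht.1, ht.2, hz.1, hz.2]
  have hg : ∀ t ∈ Icc p q,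
      HasDerivWithinAt (fun t : ℝ => f t - t • f' z) (f' t - f' z) (Icc p q) t := fun t ht => by
    simpa using (hf t ht).fun_sub ((hasDerivWithinAt_id t _).smul_const (f' z))
  have := (convex_Icc p q).norm_image_sub_le_of_norm_hasDerivWithin_le hg hf'_lip hy hx
  rw [Real.norm_eq_abs] at this
  calc ‖f x - f y - (x - y) • f' z‖ = ‖f x - x • f' z - (f y - y • f' z)‖ := by
        rw [sub_smul]; abel_nf
    _ ≤ M * (q - p) * |x - y| := this

theorem norm_ofReal_cpow_sub_sub_le {p q M : ℝ} (hp : 0 < p) (w : ℂ)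
    (hM : ∀ t ∈ Icc p q, t ^ (w.re - 2) ≤ M) {x y z : ℝ}
    (hx : x ∈ Icc p q) (hy : y ∈ Icc p q) (hz : z ∈ Icc p q) :
    ‖(x : ℂ) ^ w - (y : ℂ) ^ w - (x - y) * (w * (z : ℂ) ^ (w - 1))‖ ≤
      ‖w‖ * ‖w - 1‖ * M * (q - p) * |x - y| := by
  have hderiv (v : ℂ) (t : ℝ) (ht : t ∈ Icc p q) :
      HasDerivWithinAt (fun t : ℝ => (t : ℂ) ^ v) (v * (t : ℂ) ^ (v - 1)) (Icc p q) t :=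
    ((hasStrictDerivAt_cpow_const (ofReal_mem_slitPlane.mpr (hp.trans_le ht.1))).hasDerivAt
      |>.comp_ofReal).hasDerivWithinAt
  rw [← ofReal_sub, ← real_smul]
  refine norm_sub_sub_smul_deriv_le (hderiv w) (fun t ht => (hderiv (w - 1) t ht).const_mul w)
    (fun t ht => ?_) hx hy hz
  rw [norm_mul, norm_mul, norm_cpow_eq_rpow_re_of_pos (hp.trans_le ht.1), mul_assoc]
  simp only [sub_re, sub_sub, one_add_one_eq_two]
  gcongr
  exact hM t ht

theorem rpow_le_rpow_mul_rpow_of_mul_le {m x t ρ σ R : ℝ} (hm : 0 < m) (hm1 : m ≤ 1)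
    (hx : 1 ≤ x) (ht : x * m ≤ t) (hρ : -2 ≤ ρ) (hσρ : σ ≤ ρ) (hρR : ρ ≤ R) :
    t ^ (-ρ - 2) ≤ m ^ (-R - 2) * x ^ (-σ - 2) :=
  calc t ^ (-ρ - 2) ≤ (x * m) ^ (-ρ - 2) :=
        Real.rpow_le_rpow_of_nonpos (by positivity) ht (by linarith)
    _ = m ^ (-ρ - 2) * x ^ (-ρ - 2) := by rw [Real.mul_rpow (by linarith) hm.le, mul_comm]
    _ ≤ m ^ (-R - 2) * x ^ (-σ - 2) := by
        gcongr ?_ * ?_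
        · exact Real.rpow_le_rpow_of_exponent_ge hm hm1 (by linarith)
        · exact Real.rpow_le_rpow_of_exponent_le hx (by linarith)

noncomputable def oddCorrectedTerm (a : ℝ) (n : ℕ) (s : ℂ) : ℂ :=
  ((n + a : ℝ) : ℂ) ^ (-s) - ((n + 1 - a : ℝ) : ℂ) ^ (-s)
    + (2 * a - 1) * (((n + 1 : ℝ) : ℂ) ^ (-s) - ((n + 2 : ℝ) : ℂ) ^ (-s))

theorem norm_oddCorrectedTerm_le {a : ℝ} (ha : a ∈ Ioo 0 1) (n : ℕ) {s : ℂ} {σ R : ℝ}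
    (hσ : -2 ≤ σ) (hσs : σ ≤ s.re) (hsR : ‖s‖ ≤ R) :
    ‖oddCorrectedTerm a n s‖ ≤
      4 * R * (R + 1) * min a (1 - a) ^ (-R - 2) * ((n : ℝ) + 1) ^ (-σ - 2) := by
  set m := min a (1 - a)
  have hm : 0 < m := lt_min ha.1 (by linarith [ha.2])
  have hma : m ≤ a := min_le_left _ _
  have hma' : m ≤ 1 - a := min_le_right _ _
  have hn : (0 : ℝ) ≤ n := n.cast_nonneg
  set M := m ^ (-R - 2) * ((n : ℝ) + 1) ^ (-σ - 2)
  have hM : ∀ t ∈ Icc (n + m) (n + 2), t ^ ((-s).re - 2) ≤ M := fun t ht => by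
    refine rpow_le_rpow_mul_rpow_of_mul_le (ρ := s.re) hm (by linarith) (by linarith) ?_
      (by linarith) hσs ((re_le_norm s).trans hsR)
    nlinarith [ht.1]
  have mem {t : ℝ} (h₁ : m ≤ t) (h₂ : t ≤ 2) : (n + t : ℝ) ∈ Icc (n + m) (n + 2) :=
    ⟨by linarith, by linarith⟩
  set K := ‖-s‖ * ‖-s - 1‖ * M * (n + 2 - (n + m))
  have hfirst := norm_ofReal_cpow_sub_sub_le (by positivity) (-s) hM
    (mem hma (by linarith [ha.2])) (mem hma' (by linarith [ha.1])) (mem (by linarith) one_le_two)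
  have hsecond := norm_ofReal_cpow_sub_sub_le (by positivity) (-s) hM
    (mem (by linarith) le_rfl) (mem (by linarith) one_le_two) (mem (by linarith) one_le_two)
  have h2a : |2 * a - 1| ≤ 1 := abs_le.mpr ⟨by linarith [ha.1], by linarith [ha.2]⟩
  have hR : 0 ≤ R := (norm_nonneg s).trans hsR
  have hM0 : 0 ≤ M := by positivity
  have hK : K ≤ 2 * R * (R + 1) * M := by
    have : ‖-s - 1‖ ≤ R + 1 := by
      rw [← neg_add', norm_neg]
      exact (norm_add_le _ _).trans (by simpa using hsR)
    simp only [K, norm_neg]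
    calc ‖s‖ * ‖-s - 1‖ * M * (n + 2 - (n + m)) ≤ R * (R + 1) * M * 2 := by
          gcongr <;> linarith
      _ = 2 * R * (R + 1) * M := by ring
  rw [show (n : ℝ) + a - (n + (1 - a)) = 2 * a - 1 by ring] at hfirst
  rw [show (n : ℝ) + 2 - (n + 1) = 1 by ring, abs_one] at hsecond
  have hsplit : oddCorrectedTerm a n s =
      (((n + a : ℝ) : ℂ) ^ (-s) - ((n + (1 - a) : ℝ) : ℂ) ^ (-s)
        - (((n + a : ℝ) : ℂ) - ((n + (1 - a) : ℝ) : ℂ)) * (-s * ((n + 1 : ℝ) : ℂ) ^ (-s - 1)))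
      - (2 * a - 1) * (((n + 2 : ℝ) : ℂ) ^ (-s) - ((n + 1 : ℝ) : ℂ) ^ (-s)
        - (((n + 2 : ℝ) : ℂ) - ((n + 1 : ℝ) : ℂ)) * (-s * ((n + 1 : ℝ) : ℂ) ^ (-s - 1))) := by
    rw [oddCorrectedTerm, add_sub_assoc' (n : ℝ) 1 a]
    push_cast
    ring
  calc ‖oddCorrectedTerm a n s‖ ≤ K * |2 * a - 1| + |2 * a - 1| * (K * 1) := by
        rw [hsplit]
        refine (norm_sub_le _ _).trans (add_le_add hfirst ?_)
        rw [norm_mul]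
        gcongr
        · norm_cast
    _ = 2 * K * |2 * a - 1| := by ring
    _ ≤ 2 * (2 * R * (R + 1) * M) * 1 := by gcongr
    _ = _ := by ring

theorem differentiable_oddCorrectedTerm {a : ℝ} (ha : a ∈ Ioo 0 1) (n : ℕ) :
    Differentiable ℂ (oddCorrectedTerm a n) := by
  have hn : (0 : ℝ) ≤ n := n.cast_nonneg
  have cpow_neg {x : ℝ} (hx : 0 < x) : Differentiable ℂ fun s : ℂ => (x : ℂ) ^ (-s) :=
    differentiable_neg.const_cpow (Or.inl (ofReal_ne_zero.mpr hx.ne'))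
  obtain ⟨ha₀, ha₁⟩ := ha
  unfold oddCorrectedTerm
  exact ((cpow_neg (by linarith)).sub (cpow_neg (by linarith))).add
    (((cpow_neg (by linarith)).sub (cpow_neg (by linarith))).const_mul _)

theorem summable_nat_add_one_rpow {p : ℝ} (hp : p < -1) :
    Summable fun n : ℕ => ((n : ℝ) + 1) ^ p := by
  simpa using (summable_nat_add_iff 1).mpr (Real.summable_nat_rpow.mpr hp)

theorem differentiableOn_tsum_oddCorrectedTerm {a : ℝ} (ha : a ∈ Ioo 0 1) :
    DifferentiableOn ℂ (fun s => ∑' n, oddCorrectedTerm a n s) {s | -1 < s.re} := by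
  intro s₀ (hs₀ : -1 < s₀.re)
  set σ := (s₀.re - 1) / 2
  set R := ‖s₀‖ + 1
  have hσ : -1 < σ := by simp only [σ]; linarith
  set V := {s : ℂ | σ < s.re} ∩ Metric.ball 0 R
  have hV : IsOpen V := (isOpen_lt continuous_const continuous_re).inter Metric.isOpen_ball
  have hs₀V : s₀ ∈ V := ⟨show σ < s₀.re by simp only [σ]; linarith, by simp [R]⟩
  refine (DifferentiableOn.differentiableAt ?_ (hV.mem_nhds hs₀V)).differentiableWithinAt
  refine differentiableOn_tsum_of_summable_norm
    ((summable_nat_add_one_rpow (p := -σ - 2) (by linarith)).mul_left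
      (4 * R * (R + 1) * min a (1 - a) ^ (-R - 2)))
    (fun n => (differentiable_oddCorrectedTerm ha n).differentiableOn) hV fun n s hs => ?_
  exact norm_oddCorrectedTerm_le ha n (by linarith) hs.1.le
    (by simpa using (Metric.mem_ball.mp hs.2).le)

theorem hasSum_sub_nat_add_one {G : Type*} [AddCommGroup G] [TopologicalSpace G]
    [IsTopologicalAddGroup G] {f : ℕ → G} (hf : Summable f) :
    HasSum (fun n => f n - f (n + 1)) (f 0) := by
  have := hf.hasSum.sub ((hasSum_nat_add_iff' 1).mpr hf.hasSum)
  simpa using this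

theorem hasSum_oddCorrectedTerm {a : ℝ} (ha : a ∈ Ioo 0 1) {s : ℂ} (hs : 1 < s.re) :
    HasSum (fun n => oddCorrectedTerm a n s) (2 * hurwitzZetaOdd a s + (2 * a - 1)) := by
  set g : ℕ → ℂ := fun n => (((n : ℝ) + 1 : ℝ) : ℂ) ^ (-s)
  have hg : Summable g := by
    refine Summable.of_norm ?_
    simp_rw [g, norm_cpow_eq_rpow_re_of_pos (Nat.cast_add_one_pos _), neg_re]
    exact summable_nat_add_one_rpow (by linarith)
  have htel : HasSum (fun n => g n - g (n + 1)) 1 := by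
    simpa [g] using hasSum_sub_nat_add_one hg
  have hodd := (hasSum_nat_hurwitzZetaOdd_of_mem_Icc (Ioo_subset_Icc_self ha) hs).mul_left 2
  have htel' := htel.mul_left (2 * (a : ℂ) - 1)
  rw [mul_one] at htel'
  refine (hodd.add htel').congr_fun fun n => ?_
  simp only [oddCorrectedTerm, g, cpow_neg, one_div]
  push_cast
  ring_nf

theorem oddCorrectedTerm_zero (a : ℝ) (n : ℕ) : oddCorrectedTerm a n 0 = 0 := by
  simp [oddCorrectedTerm]

theorem hurwitzZetaOdd_apply_zero_of_mem_Ioo {a : ℝ} (ha : a ∈ Ioo 0 1) :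
    hurwitzZetaOdd a 0 = 1 / 2 - a := by
  set U := {s : ℂ | -1 < s.re}
  have hU : IsOpen U := isOpen_lt continuous_const continuous_re
  have hzeta : AnalyticOnNhd ℂ (fun s => 2 * hurwitzZetaOdd a s + (2 * a - 1)) U :=
    (((differentiable_hurwitzZetaOdd _).const_mul 2).add_const _).differentiableOn.analyticOnNhd hU
  have htsum := (differentiableOn_tsum_oddCorrectedTerm ha).analyticOnNhd hU
  have heq : (fun s => 2 * hurwitzZetaOdd a s + (2 * a - 1)) =ᶠ[nhds 2]
      fun s => ∑' n, oddCorrectedTerm a n s := by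
    filter_upwards [(isOpen_lt continuous_const continuous_re).mem_nhds
      (show (1 : ℝ) < (2 : ℂ).re by norm_num)] with s hs
    exact (hasSum_oddCorrectedTerm ha hs).tsum_eq.symm
  have h0 := hzeta.eqOn_of_preconnected_of_eventuallyEq htsum
    (convex_halfSpace_re_gt _).isPreconnected (by simp [U]; norm_num) heq
    (show (0 : ℂ) ∈ U by simp [U])
  simp only [oddCorrectedTerm_zero, tsum_zero] at h0
  linear_combination h0 / 2

theorem ofReal_sign_mul_exp_neg_mul_log_abs (x : ℝ) (s : ℂ) :
    ((Real.sign x : ℝ) : ℂ) * exp (-s * (Real.log |x| : ℂ)) =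
      SignType.sign x / ((|x| : ℝ) : ℂ) ^ s := by
  rcases eq_or_ne x 0 with rfl | hx
  · simp
  have habs : ((|x| : ℝ) : ℂ) ≠ 0 := ofReal_ne_zero.mpr (abs_ne_zero.mpr hx)
  rw [cpow_def_of_ne_zero habs, ← ofReal_log (abs_nonneg x), div_eq_mul_inv, ← exp_neg,
    mul_comm _ s, neg_mul]
  congr 1
  rcases hx.lt_or_gt with hx | hx
  · simp [Real.sign_of_neg hx, hx]
  · simp [Real.sign_of_pos hx, hx]

theorem hasSum_int_sign_mul_exp_neg_mul_log_abs_sub (c : ℝ) {s : ℂ} (hs : 1 < s.re) :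
    HasSum (fun n : ℤ => ((Real.sign ((n : ℝ) - c) : ℝ) : ℂ) *
      exp (-s * (Real.log |(n : ℝ) - c| : ℂ))) (-2 * hurwitzZetaOdd c s) := by
  rw [neg_mul, mul_comm, ← neg_mul, ← hurwitzZetaOdd_neg, ← AddCircle.coe_neg]
  refine ((hasSum_int_hurwitzZetaOdd (-c) hs).mul_right 2).congr_fun fun n => ?_
  rw [ofReal_sign_mul_exp_neg_mul_log_abs, sub_eq_add_neg]
  ring

theorem hurwitzZetaOdd_zero (s : ℂ) : hurwitzZetaOdd 0 s = 0 := by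
  have := hurwitzZetaOdd_neg 0 s
  rw [neg_zero, eq_neg_iff_add_eq_zero, ← two_mul, mul_eq_zero] at this
  exact this.resolve_left two_ne_zero

theorem UnitAddCircle.coe_eq_coe_of_sub_eq_intCast {x y : ℝ} {k : ℤ} (h : x - y = k) :
    (x : UnitAddCircle) = y := by
  rw [← sub_eq_zero, ← AddCircle.coe_sub, AddCircle.coe_eq_zero_iff]
  exact ⟨k, by simp [h]⟩

/-- Proposition C.1 (eta_result): the eta function of `−i d/dt − c` on
`2π`-periodic functions, `η_s = Σ_{n∈ℤ} sign(n−c)|n−c|^{−s}`, extends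
analytically to `Re s > −1` with value `−1 + 2⟨c⟩` at `s = 0` when `c ∉ ℤ`
(`⟨c⟩ ∈ (0,1)` being the fractional representative of `c`); for an integer
parameter the analogous sum over `n ≠ c` vanishes identically, so its value at
`0` is `0`. -/
theorem eta_invariant_boundary_operator
    (c cf : ℝ) (hcf : cf ∈ Set.Ioo (0:ℝ) 1) (hdiff : ∃ k : ℤ, c - cf = (k : ℝ)) :
    (∃ F : ℂ → ℂ,
      DifferentiableOn ℂ F {s : ℂ | -1 < s.re} ∧
      (∀ s : ℂ, 1 < s.re →
        HasSum (fun n : ℤ =>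
          ((Real.sign ((n : ℝ) - c) : ℝ) : ℂ) *
            Complex.exp (-s * ((Real.log |(n : ℝ) - c| : ℝ) : ℂ))) (F s)) ∧
      F 0 = -1 + 2 * (cf : ℂ)) ∧
    ∀ m : ℤ, ∀ s : ℂ, 1 < s.re →
      HasSum (fun n : {k : ℤ // k ≠ m} =>
        ((Real.sign (((n : ℤ) : ℝ) - (m : ℝ)) : ℝ) : ℂ) *
          Complex.exp (-s * ((Real.log |((n : ℤ) : ℝ) - (m : ℝ)| : ℝ) : ℂ))) 0 := by
  obtain ⟨k, hk⟩ := hdiff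
  refine ⟨⟨fun s => -2 * hurwitzZetaOdd c s,
    ((differentiable_hurwitzZetaOdd _).const_mul _).differentiableOn,
    fun s hs => hasSum_int_sign_mul_exp_neg_mul_log_abs_sub c hs, ?_⟩, fun m s hs => ?_⟩
  · simp only [UnitAddCircle.coe_eq_coe_of_sub_eq_intCast hk,
      hurwitzZetaOdd_apply_zero_of_mem_Ioo hcf]
    ring
  · have hm : ((m : ℝ) : UnitAddCircle) = 0 :=
      UnitAddCircle.coe_eq_coe_of_sub_eq_intCast (k := m) (by simp)
    have hsum := hasSum_int_sign_mul_exp_neg_mul_log_abs_sub m hs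
    rw [hm, hurwitzZetaOdd_zero, mul_zero] at hsum
    refine (hasSum_subtype_iff_of_support_subset fun n hn => ?_).mpr hsum
    rintro rfl
    simp at hn
end

section
/- Let c ∈ (0,1). Then there exists a function G : ℂ → ℂ that is analytic on the half-plane {s ∈ ℂ : Re s > −1} and satisfies G(s) = Σ_{n=1}^∞ ( (n − c)^{−s} − (n + c)^{−s} ) for every s ∈ ℂ with Re s > 1, where (n ± c)^{−s} = exp(−s·log(n ± c)). -/
/-! For `Re s > 1` the series splits as `ζ(s, 1 - c) - (ζ(s, c) - c^{-s})`, a difference of two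
Hurwitz zeta functions, the second with its `n = 0` term removed. Both Hurwitz zeta functions have
a simple pole at `s = 1` with residue `1`, so the poles cancel and
`ζ(s, 1 - c) - ζ(s, c) + c^{-s}` is entire. -/

open Complex HurwitzZeta Set

lemma cexp_neg_mul_ofReal_log (s : ℂ) {x : ℝ} (hx : 0 < x) :
    cexp (-s * Real.log x) = 1 / (x : ℂ) ^ s := by
  rw [cpow_def_of_ne_zero (ofReal_ne_zero.mpr hx.ne'), ← ofReal_log hx.le, one_div, ← exp_neg,
    neg_mul, mul_comm]

lemma hasSum_one_div_nat_add_one_add_cpow {a : ℝ} (ha : a ∈ Icc 0 1) {s : ℂ} (hs : 1 < s.re) :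
    HasSum (fun n : ℕ => 1 / ((n : ℂ) + 1 + a) ^ s) (hurwitzZeta a s - 1 / (a : ℂ) ^ s) := by
  have h := (hasSum_nat_add_iff' 1).mpr (hasSum_hurwitzZeta_of_one_lt_re ha hs)
  simpa [add_right_comm] using h

lemma differentiable_one_div_const_cpow {c : ℂ} (hc : c ≠ 0) :
    Differentiable ℂ fun s : ℂ => 1 / c ^ s := by
  simp only [one_div]
  exact (differentiable_id.const_cpow (Or.inl hc)).inv fun s => by simp [cpow_eq_zero_iff, hc]

/-- Proposition C.3 (convergence_of_differences): for `c ∈ (0,1)` the sum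
`Σ_{n≥1} ((n−c)^{−s} − (n+c)^{−s})` extends to an analytic function on the
half-plane `Re s > −1`. -/
theorem eta_sum_of_differences_analytic
    (c : ℝ) (hc : c ∈ Set.Ioo (0:ℝ) 1) :
    ∃ G : ℂ → ℂ,
      DifferentiableOn ℂ G {s : ℂ | -1 < s.re} ∧
      ∀ s : ℂ, 1 < s.re →
        HasSum (fun n : ℕ =>
          Complex.exp (-s * ((Real.log ((n : ℝ) + 1 - c) : ℝ) : ℂ)) -
            Complex.exp (-s * ((Real.log ((n : ℝ) + 1 + c) : ℝ) : ℂ))) (G s) := by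
  obtain ⟨hc0, hc1⟩ := hc
  refine ⟨fun s => hurwitzZeta (1 - c : ℝ) s - hurwitzZeta c s + 1 / (c : ℂ) ^ s, ?_, ?_⟩
  · exact ((differentiable_hurwitzZeta_sub_hurwitzZeta _ _).add
      (differentiable_one_div_const_cpow (ofReal_ne_zero.mpr hc0.ne'))).differentiableOn
  · intro s hs
    have hsum := (hasSum_hurwitzZeta_of_one_lt_re (a := 1 - c) ⟨by linarith, by linarith⟩ hs).sub
      (hasSum_one_div_nat_add_one_add_cpow ⟨hc0.le, hc1.le⟩ hs)
    rw [sub_sub_eq_add_sub, add_sub_right_comm] at hsum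
    refine hsum.congr_fun fun n => ?_
    have hn : (0 : ℝ) ≤ n := n.cast_nonneg
    rw [cexp_neg_mul_ofReal_log s (by linarith), cexp_neg_mul_ofReal_log s (by linarith)]
    push_cast
    ring_nf
end

section
/- Let c ∈ (0,1), let s ∈ ℝ with −1 < s < 2, and let n be an integer with n > 4. Define ρ(s, c, n) = (n − c)^{−s} − (n + c)^{−s} − ∫_n^{n+1} ( (x − c)^{−s} − (x + c)^{−s} ) dx. Then | ρ(s, c, n) − s(s+1)·c·n^{−s−2} | ≤ 11·|s(s+1)(s+2)|·n^{−s−3}. -/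
/-!
With `f = etaTerm c (-s)`, the quantity is `f n - ∫_n^{n+1} f`. Subtracting the tangent line of
`f` at `n` leaves `-f' n / 2`, up to an error bounded by `sup |f''|` on `[n, n+1]`; this is
`O(c n^{-s-3})` because `f''` is again a difference of two powers at distance `2c`. In turn
`-f' n / 2 = (s/2) (g (n+c) - g (n-c))` with `g u = u^{-s-1}`, a symmetric difference whose linear
part is exactly `s(s+1) c n^{-s-2}` and whose remainder is `O(c² n^{-s-3})`. All powers are bounded
at the base `n - 1`, and for `n ≥ 5` the ratio `(n/(n-1))^{s+3} ≤ (5/4)^5` turns `3` into `11`.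
-/

open intervalIntegral Set

theorem abs_sub_sub_deriv_mul_le {g g' g'' : ℝ → ℝ} {S : Set ℝ} {M r a x y : ℝ}
    (hS : Convex ℝ S) (hg : ∀ z ∈ S, HasDerivWithinAt g (g' z) S z)
    (hg' : ∀ z ∈ S, HasDerivWithinAt g' (g'' z) S z) (hM : ∀ z ∈ S, |g'' z| ≤ M)
    (hr : ∀ z ∈ S, |z - a| ≤ r) (ha : a ∈ S) (hx : x ∈ S) (hy : y ∈ S) :
    |g y - g x - g' a * (y - x)| ≤ M * r * |y - x| := by
  have hM₀ : 0 ≤ M := (abs_nonneg _).trans (hM a ha)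
  have hg'_sub : ∀ z ∈ S, ‖g' z - g' a‖ ≤ M * r := fun z hz =>
    (hS.norm_image_sub_le_of_norm_hasDerivWithin_le hg' hM ha hz).trans
      (mul_le_mul_of_nonneg_left (hr z hz) hM₀)
  have hlin : ∀ z ∈ S, HasDerivWithinAt (fun w => g w - g' a * w) (g' z - g' a) S z :=
    fun z hz => ((hg z hz).sub ((hasDerivWithinAt_id z S).const_mul (g' a))).congr_deriv
      (by simp)
  have := hS.norm_image_sub_le_of_norm_hasDerivWithin_le hlin hg'_sub hx hy
  simp only [Real.norm_eq_abs] at this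
  calc |g y - g x - g' a * (y - x)| = |g y - g' a * y - (g x - g' a * x)| := by ring_nf
    _ ≤ M * r * |y - x| := this

theorem abs_sub_integral_add_deriv_div_two_le {f f' f'' : ℝ → ℝ} {a M : ℝ}
    (hf : ∀ x ∈ Icc a (a + 1), HasDerivAt f (f' x) x)
    (hf' : ∀ x ∈ Icc a (a + 1), HasDerivAt f' (f'' x) x)
    (hM : ∀ x ∈ Icc a (a + 1), |f'' x| ≤ M) :
    |f a - (∫ x in a..a + 1, f x) + f' a / 2| ≤ M := by
  have ha : a ∈ Icc a (a + 1) := left_mem_Icc.mpr (by linarith)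
  have hunit : ∀ z ∈ Icc a (a + 1), |z - a| ≤ 1 := fun z hz =>
    abs_le.mpr ⟨by linarith [hz.1], by linarith [hz.2]⟩
  have hrem : ∀ x ∈ Icc a (a + 1), |f x - f a - f' a * (x - a)| ≤ M := fun x hx => by
    have hM₀ : 0 ≤ M := (abs_nonneg _).trans (hM a ha)
    calc |f x - f a - f' a * (x - a)| ≤ M * 1 * |x - a| :=
          abs_sub_sub_deriv_mul_le (convex_Icc _ _) (fun z hz => (hf z hz).hasDerivWithinAt)
            (fun z hz => (hf' z hz).hasDerivWithinAt) hM hunit ha ha hx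
      _ ≤ M := by nlinarith [hunit x hx]
  have hf_int : IntervalIntegrable f MeasureTheory.volume a (a + 1) := by
    refine ContinuousOn.intervalIntegrable fun x hx => ?_
    rw [uIcc_of_le (by linarith)] at hx
    exact (hf x hx).continuousAt.continuousWithinAt
  have hint_rem : ∫ x in a..a + 1, (f x - f a - f' a * (x - a))
      = (∫ x in a..a + 1, f x) - f a - f' a / 2 := by
    rw [integral_sub (hf_int.sub intervalIntegrable_const)
      ((by fun_prop : Continuous fun x => f' a * (x - a)).intervalIntegrable _ _),
      integral_sub hf_int intervalIntegrable_const, integral_const_mul,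
      integral_sub intervalIntegrable_id intervalIntegrable_const, integral_id]
    simp only [integral_const, add_sub_cancel_left, smul_eq_mul, one_mul, sub_right_inj]
    ring
  have := norm_integral_le_of_norm_le_const (a := a) (b := a + 1)
    (f := fun x => f x - f a - f' a * (x - a)) fun x hx => by
      rw [uIoc_of_le (by linarith)] at hx
      exact hrem x (Ioc_subset_Icc_self hx)
  rw [hint_rem, Real.norm_eq_abs, add_sub_cancel_left, abs_one, mul_one] at this
  rw [← abs_neg]
  convert this using 2
  ring

theorem abs_rpow_neg_sub_rpow_neg_le {p A u v : ℝ} (hp : 0 ≤ p) (hA : 0 < A)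
    (hu : A ≤ u) (hv : A ≤ v) :
    |v ^ (-p) - u ^ (-p)| ≤ p * A ^ (-p - 1) * |v - u| := by
  have hderiv : ∀ x ∈ Ici A, HasDerivWithinAt (fun y : ℝ => y ^ (-p))
      (-p * x ^ (-p - 1)) (Ici A) x := fun x hx =>
    (Real.hasDerivAt_rpow_const (Or.inl (hA.trans_le hx).ne')).hasDerivWithinAt
  have hbound : ∀ x ∈ Ici A, ‖-p * x ^ (-p - 1)‖ ≤ p * A ^ (-p - 1) := fun x hx => by
    rw [norm_mul, norm_neg, Real.norm_of_nonneg hp,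
      Real.norm_of_nonneg (Real.rpow_nonneg (hA.trans_le hx).le _)]
    exact mul_le_mul_of_nonneg_left (Real.rpow_le_rpow_of_nonpos hA hx (by linarith)) hp
  simpa only [Real.norm_eq_abs] using
    (convex_Ici A).norm_image_sub_le_of_norm_hasDerivWithin_le hderiv hbound hu hv

theorem three_mul_rpow_neg_sub_one_le {a t : ℝ} (ha : 5 ≤ a) (ht₀ : 0 ≤ t)
    (ht₅ : t ≤ 5) :
    3 * (a - 1) ^ (-t) ≤ 11 * a ^ (-t) := by
  have hratio : ((a - 1) / a) ^ (-t) ≤ (5 / 4) ^ t := by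
    calc ((a - 1) / a) ^ (-t) ≤ (4 / 5) ^ (-t) :=
          Real.rpow_le_rpow_of_nonpos (by norm_num)
            (by rw [le_div_iff₀ (by linarith)]; linarith) (by linarith)
      _ = (5 / 4) ^ t := by
          rw [Real.rpow_neg (by norm_num), ← Real.inv_rpow (by norm_num)]; norm_num
  have hpow : ((5 : ℝ) / 4) ^ t ≤ 11 / 3 :=
    calc ((5 : ℝ) / 4) ^ t ≤ (5 / 4) ^ (5 : ℝ) :=
          Real.rpow_le_rpow_of_exponent_le (by norm_num) ht₅
      _ ≤ 11 / 3 := by norm_num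
  have hsplit : (a - 1) ^ (-t) = ((a - 1) / a) ^ (-t) * a ^ (-t) := by
    rw [← Real.mul_rpow (div_nonneg (by linarith) (by linarith)) (by linarith),
      div_mul_cancel₀ _ (by linarith)]
  have ha_pow : 0 ≤ a ^ (-t) := Real.rpow_nonneg (by linarith) _
  rw [hsplit]
  nlinarith [mul_le_mul_of_nonneg_right (hratio.trans hpow) ha_pow]

noncomputable def etaTerm (c p x : ℝ) : ℝ := (x - c) ^ p - (x + c) ^ p

theorem hasDerivAt_etaTerm {c p x : ℝ} (h₁ : x - c ≠ 0) (h₂ : x + c ≠ 0) :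
    HasDerivAt (etaTerm c p) (p * etaTerm c (p - 1) x) x := by
  have hsub := ((hasDerivAt_id x).sub_const c).rpow_const (p := p) (Or.inl h₁)
  have hadd := ((hasDerivAt_id x).add_const c).rpow_const (p := p) (Or.inl h₂)
  refine (hsub.sub hadd).congr_deriv ?_
  simp only [etaTerm, id]
  ring

theorem abs_etaTerm_neg_le {c q x A : ℝ} (hc : 0 ≤ c) (hq : 0 ≤ q) (hA : 0 < A)
    (hx : A ≤ x - c) : |etaTerm c (-q) x| ≤ 2 * c * q * A ^ (-q - 1) := by
  have := abs_rpow_neg_sub_rpow_neg_le hq hA (by linarith : A ≤ x + c) hx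
  rw [show x - c - (x + c) = -(2 * c) by ring, abs_neg,
    abs_of_nonneg (by linarith : 0 ≤ 2 * c)] at this
  rw [etaTerm]
  linarith

theorem abs_etaTerm_sub_integral_add_le {c s a A : ℝ} (hc : 0 ≤ c) (hs : -2 ≤ s) (hA : 0 < A)
    (ha : A ≤ a - c) :
    |etaTerm c (-s) a - (∫ x in a..a + 1, etaTerm c (-s) x) + -s * etaTerm c (-s - 1) a / 2|
      ≤ |s * (s + 1) * (s + 2)| * A ^ (-s - 3) * (2 * c) := by
  have hpos : ∀ x ∈ Icc a (a + 1), x - c ≠ 0 ∧ x + c ≠ 0 := fun x hx =>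
    ⟨by linarith [hx.1], by linarith [hx.1]⟩
  refine abs_sub_integral_add_deriv_div_two_le (f' := fun x => -s * etaTerm c (-s - 1) x)
    (f'' := fun x => s * (s + 1) * etaTerm c (-s - 2) x)
    (fun x hx => hasDerivAt_etaTerm (hpos x hx).1 (hpos x hx).2)
    (fun x hx => ?_) (fun x hx => ?_)
  · refine ((hasDerivAt_etaTerm (hpos x hx).1 (hpos x hx).2).const_mul (-s)).congr_deriv ?_
    rw [show -s - 1 - 1 = -s - 2 by ring]
    ring
  · have := abs_etaTerm_neg_le (x := x) hc (by linarith : 0 ≤ s + 2) hA (by linarith [hx.1])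
    rw [show -(s + 2) = -s - 2 by ring, show -s - 2 - 1 = -s - 3 by ring] at this
    rw [abs_mul, abs_mul (s * (s + 1)), abs_of_nonneg (by linarith : 0 ≤ s + 2)]
    calc |s * (s + 1)| * |etaTerm c (-s - 2) x|
        ≤ |s * (s + 1)| * (2 * c * (s + 2) * A ^ (-s - 3)) := by gcongr
      _ = _ := by ring

theorem abs_deriv_etaTerm_div_two_add_le {c s a A : ℝ} (hc : 0 ≤ c) (hs : -3 ≤ s) (hA : 0 < A)
    (ha : A ≤ a - c) :
    |-s * etaTerm c (-s - 1) a / 2 + s * (s + 1) * c * a ^ (-s - 2)|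
      ≤ |s * (s + 1) * (s + 2)| * A ^ (-s - 3) * c ^ 2 := by
  have hpos : ∀ u ∈ Icc (a - c) (a + c), 0 < u := fun u hu => by linarith [hu.1]
  have hderiv : ∀ (p : ℝ), ∀ u ∈ Icc (a - c) (a + c), HasDerivWithinAt (fun v => v ^ p)
      (p * u ^ (p - 1)) (Icc (a - c) (a + c)) u := fun p u hu =>
    (Real.hasDerivAt_rpow_const (Or.inl (hpos u hu).ne')).hasDerivWithinAt
  have hlin := abs_sub_sub_deriv_mul_le (convex_Icc (a - c) (a + c)) (hderiv (-s - 1))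
    (fun u hu => (hderiv (-s - 1 - 1) u hu).const_mul (-s - 1))
    (M := |(s + 1) * (s + 2)| * A ^ (-s - 3)) (r := c) (a := a)
    (fun u hu => by
      rw [show -s - 1 - 1 - 1 = -s - 3 by ring, ← mul_assoc,
        show (-s - 1) * (-s - 1 - 1) = (s + 1) * (s + 2) by ring, abs_mul,
        abs_of_pos (Real.rpow_pos_of_pos (hpos u hu) _)]
      exact mul_le_mul_of_nonneg_left
        (Real.rpow_le_rpow_of_nonpos hA (by linarith [hu.1]) (by linarith)) (abs_nonneg _))
    (fun u hu => abs_le.mpr ⟨by linarith [hu.1], by linarith [hu.2]⟩)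
    ⟨by linarith, by linarith⟩ (left_mem_Icc.mpr (by linarith))
    (right_mem_Icc.mpr (by linarith))
  rw [show -s - 1 - 1 = -s - 2 by ring, show a + c - (a - c) = 2 * c by ring,
    abs_of_nonneg (by linarith : 0 ≤ 2 * c)] at hlin
  calc |-s * etaTerm c (-s - 1) a / 2 + s * (s + 1) * c * a ^ (-s - 2)|
      = |s / 2|
          * |(a + c) ^ (-s - 1) - (a - c) ^ (-s - 1) - (-s - 1) * a ^ (-s - 2) * (2 * c)| := by
        rw [← abs_mul, etaTerm]; ring_nf
    _ ≤ |s / 2| * (|(s + 1) * (s + 2)| * A ^ (-s - 3) * c * (2 * c)) := by gcongr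
    _ = |s * (s + 1) * (s + 2)| * A ^ (-s - 3) * c ^ 2 := by
        rw [abs_div, abs_two, mul_assoc s, abs_mul s]; ring

/-- Lemma C.2 (asymptotics): for `c ∈ (0,1)`, `s ∈ (−1,2)` and integer `n > 4`,
the quantity
`ρ(s,c,n) = (n−c)^{−s} − (n+c)^{−s} − ∫_n^{n+1} ((x−c)^{−s} − (x+c)^{−s}) dx`
satisfies `|ρ(s,c,n) − s(s+1)c n^{−s−2}| ≤ 11 |s(s+1)(s+2)| n^{−s−3}`. -/
theorem eta_term_integral_comparison
    (c s : ℝ) (hc : c ∈ Set.Ioo (0:ℝ) 1) (hs₁ : -1 < s) (hs₂ : s < 2)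
    (n : ℤ) (hn : 4 < n) :
    |(((n : ℝ) - c) ^ (-s) - ((n : ℝ) + c) ^ (-s)
        - ∫ x in (n : ℝ)..((n : ℝ) + 1), ((x - c) ^ (-s) - (x + c) ^ (-s)))
      - s * (s + 1) * c * (n : ℝ) ^ (-s - 2)|
      ≤ 11 * |s * (s + 1) * (s + 2)| * (n : ℝ) ^ (-s - 3) := by
  obtain ⟨hc₀, hc₁⟩ := hc
  have ha : (5 : ℝ) ≤ n := by exact_mod_cast (by omega : (5 : ℤ) ≤ n)
  show |(etaTerm c (-s) n - ∫ x in (n : ℝ)..n + 1, etaTerm c (-s) x)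
    - s * (s + 1) * c * (n : ℝ) ^ (-s - 2)| ≤ _
  set a : ℝ := (n : ℝ)
  have htrap := abs_etaTerm_sub_integral_add_le (s := s) hc₀.le (by linarith)
    (by linarith : 0 < a - 1) (by linarith : a - 1 ≤ a - c)
  have hlin := abs_deriv_etaTerm_div_two_add_le (s := s) hc₀.le (by linarith)
    (by linarith : 0 < a - 1) (by linarith : a - 1 ≤ a - c)
  have hcmp := three_mul_rpow_neg_sub_one_le ha (by linarith : 0 ≤ s + 3) (by linarith)
  rw [show -(s + 3) = -s - 3 by ring] at hcmp
  set K := |s * (s + 1) * (s + 2)| * (a - 1) ^ (-s - 3)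
  have hK : 0 ≤ K := mul_nonneg (abs_nonneg _) (Real.rpow_nonneg (by linarith) _)
  calc _ = |(etaTerm c (-s) a - (∫ x in a..a + 1, etaTerm c (-s) x)
          + -s * etaTerm c (-s - 1) a / 2)
        - (-s * etaTerm c (-s - 1) a / 2 + s * (s + 1) * c * a ^ (-s - 2))| := by ring_nf
    _ ≤ K * (2 * c) + K * c ^ 2 := (abs_sub _ _).trans (add_le_add htrap hlin)
    _ ≤ K * 3 := by rw [← mul_add]; exact mul_le_mul_of_nonneg_left (by nlinarith) hK
    _ ≤ 11 * |s * (s + 1) * (s + 2)| * a ^ (-s - 3) := by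
        nlinarith [abs_nonneg (s * (s + 1) * (s + 2))]
end

section
/- Let c ∈ (0,1). For every real s with 0 < s < 1 the integral ∫₁^∞ ( (x − c)^{−s} − (x + c)^{−s} ) dx converges, and lim_{s → 0⁺} ∫₁^∞ ( (x − c)^{−s} − (x + c)^{−s} ) dx = 2c. Consequently lim_{s → 0⁺} ( −c^{−s} + ∫₁^∞ ( (x − c)^{−s} − (x + c)^{−s} ) dx ) = −1 + 2c. -/
/-!
For `0 < s < 1` the integrand is nonnegative with antiderivative
`((x - c)^(1-s) - (x + c)^(1-s)) / (1 - s)`, which vanishes at infinity because, by the mean value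
theorem, `(x + c)^(1-s) - (x - c)^(1-s) = O((x - c)^(-s))`. So the integral equals
`((1 + c)^(1-s) - (1 - c)^(1-s)) / (1 - s)`, which is continuous in `s` and equals `2c` at `s = 0`;
meanwhile `c^(-s) → 1`.
-/

open MeasureTheory Filter Set Topology

section

variable {c s : ℝ}

lemma hasDerivAt_rpow_sub_const_sub_rpow_add_const (hs : s ≠ 1) {x : ℝ}
    (hx₁ : x - c ≠ 0) (hx₂ : x + c ≠ 0) :
    HasDerivAt (fun y : ℝ => (y - c) ^ (1 - s) / (1 - s) - (y + c) ^ (1 - s) / (1 - s))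
      ((x - c) ^ (-s) - (x + c) ^ (-s)) x := by
  have hshift : ∀ a : ℝ, x + a ≠ 0 →
      HasDerivAt (fun y : ℝ => (y + a) ^ (1 - s) / (1 - s)) ((x + a) ^ (-s)) x := by
    intro a ha
    refine ((((hasDerivAt_id x).add_const a).rpow_const (p := 1 - s) (Or.inl ha)).div_const
      (1 - s)).congr_deriv ?_
    rw [id, one_mul, mul_div_cancel_left₀ _ (sub_ne_zero.2 (Ne.symm hs)), sub_sub_cancel_left]
  have h := (hshift (-c) (by rwa [← sub_eq_add_neg])).sub (hshift c hx₂)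
  simp only [← sub_eq_add_neg] at h
  exact h

lemma abs_rpow_add_sub_rpow_sub_le (hs : 0 ≤ s) (hc : 0 ≤ c) {x : ℝ} (hx : c < x) :
    |(x + c) ^ (1 - s) - (x - c) ^ (1 - s)| ≤ |1 - s| * (x - c) ^ (-s) * (2 * c) := by
  have hxc : 0 < x - c := sub_pos.2 hx
  have hderiv : ∀ t ∈ Icc (x - c) (x + c),
      HasDerivWithinAt (fun t : ℝ => t ^ (1 - s)) ((1 - s) * t ^ (-s))
        (Icc (x - c) (x + c)) t := by
    intro t ht
    have := Real.hasDerivAt_rpow_const (p := 1 - s) (Or.inl (hxc.trans_le ht.1).ne')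
    rw [sub_sub_cancel_left] at this
    exact this.hasDerivWithinAt
  have hbound : ∀ t ∈ Icc (x - c) (x + c),
      ‖(1 - s) * t ^ (-s)‖ ≤ |1 - s| * (x - c) ^ (-s) := by
    intro t ht
    rw [norm_mul, Real.norm_eq_abs, Real.norm_eq_abs,
      abs_of_nonneg (Real.rpow_nonneg (hxc.le.trans ht.1) _)]
    exact mul_le_mul_of_nonneg_left (Real.rpow_le_rpow_of_nonpos hxc ht.1 (neg_nonpos.2 hs))
      (abs_nonneg _)
  have := (convex_Icc (x - c) (x + c)).norm_image_sub_le_of_norm_hasDerivWithin_le hderiv hbound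
    (left_mem_Icc.2 (by linarith)) (right_mem_Icc.2 (by linarith))
  rwa [Real.norm_eq_abs, Real.norm_eq_abs, add_sub_sub_cancel, ← two_mul,
    abs_of_nonneg (by positivity : 0 ≤ 2 * c)] at this

lemma tendsto_rpow_add_sub_rpow_sub_atTop (hs : 0 < s) (hc : 0 ≤ c) :
    Tendsto (fun x : ℝ => (x + c) ^ (1 - s) - (x - c) ^ (1 - s)) atTop (𝓝 0) := by
  have hdecay : Tendsto (fun x : ℝ => |1 - s| * (x - c) ^ (-s) * (2 * c)) atTop (𝓝 0) := by
    simpa [sub_eq_add_neg] using (((tendsto_rpow_neg_atTop hs).comp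
      (tendsto_atTop_add_const_right _ (-c) tendsto_id)).const_mul |1 - s|).mul_const (2 * c)
  exact squeeze_zero_norm' ((eventually_gt_atTop c).mono fun x hx =>
    abs_rpow_add_sub_rpow_sub_le hs.le hc hx) hdecay

lemma integrableOn_Ioi_one_and_integral_rpow_sub_sub_rpow_add
    (hs₀ : 0 < s) (hs₁ : s ≠ 1) (hc₀ : 0 ≤ c) (hc₁ : c < 1) :
    IntegrableOn (fun x : ℝ => (x - c) ^ (-s) - (x + c) ^ (-s)) (Ioi 1) ∧
      ∫ x in Ioi (1:ℝ), ((x - c) ^ (-s) - (x + c) ^ (-s)) =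
        ((1 + c) ^ (1 - s) - (1 - c) ^ (1 - s)) / (1 - s) := by
  have hderiv : ∀ x ∈ Ici (1:ℝ), HasDerivAt
      (fun y : ℝ => (y - c) ^ (1 - s) / (1 - s) - (y + c) ^ (1 - s) / (1 - s))
      ((x - c) ^ (-s) - (x + c) ^ (-s)) x := fun x (hx : 1 ≤ x) =>
    hasDerivAt_rpow_sub_const_sub_rpow_add_const hs₁ (by linarith) (by linarith)
  have hnonneg : ∀ x ∈ Ioi (1:ℝ), 0 ≤ (x - c) ^ (-s) - (x + c) ^ (-s) :=
    fun x (hx : 1 < x) =>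
      sub_nonneg.2 (Real.rpow_le_rpow_of_nonpos (by linarith) (by linarith) (by linarith))
  have hlim : Tendsto (fun y : ℝ => (y - c) ^ (1 - s) / (1 - s) - (y + c) ^ (1 - s) / (1 - s))
      atTop (𝓝 0) := by
    simpa [← sub_div] using
      ((tendsto_rpow_add_sub_rpow_sub_atTop hs₀ hc₀).neg).div_const (1 - s)
  refine ⟨integrableOn_Ioi_deriv_of_nonneg' hderiv hnonneg hlim, ?_⟩
  rw [integral_Ioi_of_hasDerivAt_of_nonneg' hderiv hnonneg hlim]
  ring

lemma tendsto_rpow_one_add_sub_rpow_one_sub_div (c : ℝ) :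
    Tendsto (fun s : ℝ => ((1 + c) ^ (1 - s) - (1 - c) ^ (1 - s)) / (1 - s))
      (𝓝 0) (𝓝 (2 * c)) := by
  have hcont :
      ContinuousAt (fun s : ℝ => ((1 + c) ^ (1 - s) - (1 - c) ^ (1 - s)) / (1 - s)) 0 := by
    have hexp : ContinuousAt (fun s : ℝ => 1 - s) 0 := by fun_prop
    exact (((Real.continuousAt_const_rpow' (by norm_num)).comp hexp).sub
      ((Real.continuousAt_const_rpow' (by norm_num)).comp hexp)).div hexp (by norm_num)
  convert hcont.tendsto using 2
  norm_num
  ring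

end

/-- Final evaluation in Appendix C: for `c ∈ (0,1)` and `0 < s < 1` the integral
`∫₁^∞ ((x−c)^{−s} − (x+c)^{−s}) dx` converges, tends to `2c` as `s → 0⁺`, and
consequently `−c^{−s} + ∫₁^∞ ((x−c)^{−s} − (x+c)^{−s}) dx → −1 + 2c`. -/
theorem eta_invariant_value_limit
    (c : ℝ) (hc : c ∈ Set.Ioo (0:ℝ) 1) :
    (∀ s : ℝ, s ∈ Set.Ioo (0:ℝ) 1 →
      IntegrableOn (fun x : ℝ => (x - c) ^ (-s) - (x + c) ^ (-s)) (Set.Ioi 1)) ∧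
    Tendsto (fun s : ℝ => ∫ x in Set.Ioi (1:ℝ), ((x - c) ^ (-s) - (x + c) ^ (-s)))
      (nhdsWithin 0 (Set.Ioi 0)) (nhds (2 * c)) ∧
    Tendsto (fun s : ℝ =>
        -c ^ (-s) + ∫ x in Set.Ioi (1:ℝ), ((x - c) ^ (-s) - (x + c) ^ (-s)))
      (nhdsWithin 0 (Set.Ioi 0)) (nhds (-1 + 2 * c)) := by
  obtain ⟨hc₀, hc₁⟩ := hc
  have hclosed (s : ℝ) (hs : s ∈ Ioo (0:ℝ) 1) :=
    integrableOn_Ioi_one_and_integral_rpow_sub_sub_rpow_add hs.1 hs.2.ne hc₀.le hc₁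
  have hintegral : Tendsto (fun s : ℝ => ∫ x in Ioi (1:ℝ), ((x - c) ^ (-s) - (x + c) ^ (-s)))
      (𝓝[>] 0) (𝓝 (2 * c)) := by
    refine ((tendsto_rpow_one_add_sub_rpow_one_sub_div c).mono_left nhdsWithin_le_nhds).congr' ?_
    filter_upwards [Ioo_mem_nhdsGT (zero_lt_one' ℝ)] with s hs
    exact (hclosed s hs).2.symm
  have hpow : Tendsto (fun s : ℝ => -c ^ (-s)) (𝓝[>] 0) (𝓝 (-1)) := by
    have hcont : ContinuousAt (fun s : ℝ => c ^ (-s)) 0 :=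
      (Real.continuousAt_const_rpow hc₀.ne').comp continuous_neg.continuousAt
    simpa using hcont.tendsto.neg.mono_left (nhdsWithin_le_nhds (s := Ioi (0:ℝ)))
  exact ⟨fun s hs => (hclosed s hs).1, hintegral, hpow.add hintegral⟩
end

section
/- Let n ∈ ℤ, Φ = (2n − 1)·π, and S ∈ ℝ \ {0}. Define u⁺, u⁻ : ℂ \ {0} → ℂ by u⁺(z) = (i/S)·|z|^{−Φ/(2π)}·z^{n−1} and u⁻(z) = |z|^{Φ/(2π)}·conj(z)^{−n}. Then: (i) the function z ↦ |z|^{Φ/(2π)}·u⁺(z) = (i/S)·z^{n−1} is holomorphic on ℂ \ {0} and z ↦ conj( |z|^{−Φ/(2π)}·u⁻(z) ) = z^{−n} is holomorphic on ℂ \ {0} (so (u⁺, u⁻) is a zero mode in the Aharonov–Casher gauge with scalar potential h(z) = −(Φ/2π)·log|z|); and (ii) for every z ≠ 0, u⁻(z) = −i·S·(z/|z|)·u⁺(z). In particular, for any radii 0 < R₁ < R_out the pair satisfies the Berry–Mondragón boundary condition u⁻ = −i(n₁ + i n₂)·S₁·u⁺ on the circle |z| = R₁ with S₁ = S and inward normal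 (n₁, n₂) = z/|z|, and on the circle |z| = R_out with parameter S_out = −S and inward normal −z/|z|. -/
/-! Since `conj z = |z|² / z`, one has `|z|^a conj(z)^{-n} = |z|^{a-2n} z^n`, and the flux
condition `2a + 1 = 2n` (with `a = Φ/2π`) turns the exponent into `-a - 1`: this is exactly
`-iS (z/|z|) u⁺(z) = |z|^{-a-1} z^n`. The holomorphy claims are the cancellation
`|z|^a |z|^{-a} = 1` of the Aharonov–Casher gauge factors. -/

open ComplexConjugate

lemma flux_div_two_pi {n : ℤ} {Φ : ℝ} (hΦ : Φ = (2 * (n : ℝ) - 1) * Real.pi) :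
    Φ / (2 * Real.pi) = n - 1 / 2 := by
  rw [hΦ]; field_simp

lemma ofReal_rpow_mul_ofReal_rpow_neg {r : ℝ} (hr : 0 < r) (a : ℝ) :
    ((r ^ a : ℝ) : ℂ) * ((r ^ (-a) : ℝ) : ℂ) = 1 := by
  rw [← Complex.ofReal_mul, ← Real.rpow_add hr, add_neg_cancel, Real.rpow_zero,
    Complex.ofReal_one]

lemma Complex.conj_zpow_neg {z : ℂ} (hz : z ≠ 0) (n : ℤ) :
    conj z ^ (-n) = (‖z‖ : ℂ) ^ (-(2 * n)) * z ^ n := by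
  have hconj : conj z = (‖z‖ : ℂ) ^ 2 * z⁻¹ := by
    rw [← Complex.conj_mul', mul_inv_cancel_right₀ hz]
  rw [hconj, mul_zpow, inv_zpow', neg_neg, ← zpow_natCast, ← zpow_mul]
  ring_nf

lemma Real.rpow_mul_zpow_neg_two_mul {r a : ℝ} (hr : 0 < r) {n : ℤ} (ha : 2 * a + 1 = 2 * n) :
    r ^ a * r ^ (-(2 * n)) = r ^ (-a) / r := by
  rw [← Real.rpow_intCast, ← Real.rpow_add hr, ← Real.rpow_sub_one hr.ne']
  congr 1
  push_cast
  linarith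

lemma ofReal_rpow_mul_conj_zpow_neg {z : ℂ} (hz : z ≠ 0) {a : ℝ} {n : ℤ}
    (ha : 2 * a + 1 = 2 * n) :
    ((‖z‖ ^ a : ℝ) : ℂ) * conj z ^ (-n) = ((‖z‖ ^ (-a) : ℝ) : ℂ) / ‖z‖ * z ^ n := by
  rw [Complex.conj_zpow_neg hz, ← mul_assoc, ← Complex.ofReal_zpow, ← Complex.ofReal_mul,
    Real.rpow_mul_zpow_neg_two_mul (norm_pos_iff.mpr hz) ha, Complex.ofReal_div]

/-- The explicit zero mode of Section 5 on the annulus with Berry–Mondragón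
boundary conditions: for flux `Φ = (2n−1)π`, the pair
`u⁺(z) = (i/S)|z|^{−Φ/2π} z^{n−1}`, `u⁻(z) = |z|^{Φ/2π} conj(z)^{−n}`
is a zero mode in the Aharonov–Casher gauge with `h(z) = −(Φ/2π) log|z|`
(i.e. `|z|^{Φ/2π} u⁺` is holomorphic and `conj(|z|^{−Φ/2π} u⁻)` is holomorphic
on `ℂ \ {0}`), satisfies `u⁻ = −iS (z/|z|) u⁺`, and hence the Berry–Mondragón
condition on any circles `|z| = R₁ < R_out` with parameters `S` (inner, inward
normal `z/|z|`) and `−S` (outer, inward normal `−z/|z|`). -/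
theorem berry_mondragon_annulus_zero_mode
    (n : ℤ) (Φ S : ℝ) (hΦ : Φ = (2 * (n : ℝ) - 1) * Real.pi) (hS : S ≠ 0)
    (up um : ℂ → ℂ)
    (hup : ∀ z : ℂ, up z = (Complex.I / (S : ℂ)) *
        ((‖z‖ ^ (-(Φ / (2 * Real.pi))) : ℝ) : ℂ) * z ^ (n - 1))
    (hum : ∀ z : ℂ, um z =
        ((‖z‖ ^ (Φ / (2 * Real.pi)) : ℝ) : ℂ) * (starRingEnd ℂ z) ^ (-n)) :
    DifferentiableOn ℂ
      (fun z : ℂ => ((‖z‖ ^ (Φ / (2 * Real.pi)) : ℝ) : ℂ) * up z)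
      {z : ℂ | z ≠ 0} ∧
    (∀ z : ℂ, z ≠ 0 →
      ((‖z‖ ^ (Φ / (2 * Real.pi)) : ℝ) : ℂ) * up z
        = (Complex.I / (S : ℂ)) * z ^ (n - 1)) ∧
    DifferentiableOn ℂ
      (fun z : ℂ => starRingEnd ℂ
        (((‖z‖ ^ (-(Φ / (2 * Real.pi))) : ℝ) : ℂ) * um z))
      {z : ℂ | z ≠ 0} ∧
    (∀ z : ℂ, z ≠ 0 →
      starRingEnd ℂ (((‖z‖ ^ (-(Φ / (2 * Real.pi))) : ℝ) : ℂ) * um z)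
        = z ^ (-n)) ∧
    (∀ z : ℂ, z ≠ 0 →
      um z = -Complex.I * (S : ℂ) * (z / ((‖z‖ : ℝ) : ℂ)) * up z) ∧
    (∀ R₁ Rout : ℝ, 0 < R₁ → R₁ < Rout →
      (∀ z : ℂ, ‖z‖ = R₁ →
        um z = -Complex.I * (z / (R₁ : ℂ)) * (S : ℂ) * up z) ∧
      (∀ z : ℂ, ‖z‖ = Rout →
        um z = -Complex.I * (-(z / (Rout : ℂ))) * ((-S : ℝ) : ℂ) * up z)) := by
  have ha : 2 * (Φ / (2 * Real.pi)) + 1 = 2 * n := by rw [flux_div_two_pi hΦ]; ring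
  set a := Φ / (2 * Real.pi)
  have hcancel (z : ℂ) (hz : z ≠ 0) := ofReal_rpow_mul_ofReal_rpow_neg (norm_pos_iff.mpr hz) a
  have hplus (z : ℂ) (hz : z ≠ 0) :
      ((‖z‖ ^ a : ℝ) : ℂ) * up z = Complex.I / S * z ^ (n - 1) := by
    rw [hup]
    linear_combination Complex.I / S * z ^ (n - 1) * hcancel z hz
  have hminus (z : ℂ) (hz : z ≠ 0) :
      conj (((‖z‖ ^ (-a) : ℝ) : ℂ) * um z) = z ^ (-n) := by
    rw [hum, ← mul_assoc, mul_comm _ ((‖z‖ ^ a : ℝ) : ℂ), hcancel z hz, one_mul,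
      map_zpow₀, Complex.conj_conj]
  have hbm (z : ℂ) (hz : z ≠ 0) : um z = -Complex.I * S * (z / ‖z‖) * up z := by
    have hSc : (S : ℂ) ≠ 0 := Complex.ofReal_ne_zero.mpr hS
    rw [hum, ofReal_rpow_mul_conj_zpow_neg hz ha, hup, zpow_sub_one₀ hz]
    field_simp
    rw [Complex.I_sq]
    ring
  have hzero {z : ℂ} {R : ℝ} (hR : 0 < R) (hzR : ‖z‖ = R) : z ≠ 0 :=
    norm_pos_iff.mp (hzR ▸ hR)
  refine ⟨(((differentiableOn_zpow _ _ (by simp)).const_mul _).congr hplus), hplus,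
    (differentiableOn_zpow _ _ (by simp)).congr hminus, hminus, hbm,
    fun R₁ Rout h₁ hlt => ⟨fun z hz => ?_, fun z hz => ?_⟩⟩
  · rw [hbm z (hzero h₁ hz), hz]; ring
  · rw [hbm z (hzero (h₁.trans hlt) hz), hz]; push_cast; ring
end
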